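/- arXiv:1803.00697 — 5 statements merged into one kernel-verified Lean document; each statement's English description precedes it below -/
import Mathlib

section
/- There is no expectation representation for quantum systems described by the two-dimensional complex Hilbert space ℂ². That is, there is no triple (Λ, μ, F) where Λ is a measurable space, μ is a convex-linear map from density operators on ℂ² to probability measures on Λ, and F maps each rank-1 projection E on ℂ² to a measurable function Λ → [0,1], such that Tr(ρE) = ∫_Λ F(E) dμ(ρ) for all density operators ρ and all rank-1 projections E. -/
/-!
For any rank-one projection `P` on `ℂ²`, the maximally mixed state is `½·1 = ½P + ½(1 - P)`.
Since `Tr(P·P) = 1` and `Tr((1 - P)·P) = 0`, the response function `F P` equals `1` almost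
everywhere for `μ P` and `0` almost everywhere for `μ (1 - P)`; convex-linearity then gives
`∫ |F E - F P| dμ(½·1) = 1 - Tr(PE)` for every rank-one projection `E`. Hence `1 - Tr(PE)`,
the squared sine of the angle between the two lines, would satisfy the triangle inequality,
which it does not.
-/

open MeasureTheory Matrix ComplexOrder

/-- A density operator on ℂⁿ: positive semidefinite with trace 1. -/
def IsDensity {n : ℕ} (ρ : Matrix (Fin n) (Fin n) ℂ) : Prop :=
  ρ.PosSemidef ∧ ρ.trace = 1

/-- A rank-1 projection: Hermitian idempotent of rank 1. -/
def IsRankOneProj {n : ℕ} (E : Matrix (Fin n) (Fin n) ℂ) : Prop :=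
  E.IsHermitian ∧ E * E = E ∧ E.rank = 1

theorem Matrix.trace_eq_rank_of_mul_self {n K : Type*} [Fintype n] [DecidableEq n] [Field K]
    {E : Matrix n n K} (h : E * E = E) : E.trace = E.rank := by
  have hE : IsIdempotentElem (toLin' E) := by
    rw [IsIdempotentElem, Module.End.mul_eq_comp, ← toLin'_mul, h]
  rw [← trace_toLin'_eq, (LinearMap.IsIdempotentElem.isProj_range _ hE).trace]
  rfl

theorem Matrix.IsHermitian.posSemidef_of_mul_self_eq {n 𝕜 : Type*} [Fintype n] [RCLike 𝕜]
    {E : Matrix n n 𝕜} (hH : E.IsHermitian) (hE : E * E = E) : E.PosSemidef := by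
  simpa [hH.eq, hE] using posSemidef_conjTranspose_mul_self E

namespace IsRankOneProj

variable {n : ℕ} {E : Matrix (Fin n) (Fin n) ℂ}

theorem trace_eq_one (hE : IsRankOneProj E) : E.trace = 1 := by
  rw [trace_eq_rank_of_mul_self hE.2.1, hE.2.2, Nat.cast_one]

theorem of_trace_eq_one (hH : E.IsHermitian) (hE : E * E = E) (htr : E.trace = 1) :
    IsRankOneProj E :=
  ⟨hH, hE, by exact_mod_cast (trace_eq_rank_of_mul_self hE).symm.trans htr⟩

theorem isDensity (hE : IsRankOneProj E) : IsDensity E :=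
  ⟨hE.1.posSemidef_of_mul_self_eq hE.2.1, hE.trace_eq_one⟩

theorem isDensity_one_sub {E : Matrix (Fin 2) (Fin 2) ℂ} (hE : IsRankOneProj E) :
    IsDensity (1 - E) := by
  refine ⟨(isHermitian_one.sub hE.1).posSemidef_of_mul_self_eq ?_, ?_⟩
  · rw [sub_mul, mul_sub, mul_sub, hE.2.1]; simp
  · rw [trace_sub, hE.trace_eq_one, trace_one]; norm_num

end IsRankOneProj

theorem isRankOneProj_of_real (a b d : ℝ) (htr : a + d = 1) (hdet : a * d = b ^ 2) :
    IsRankOneProj !![(a : ℂ), b; b, d] := by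
  refine .of_trace_eq_one ?_ ?_ ?_
  · ext i j; fin_cases i <;> fin_cases j <;> simp
  · have h₁ : a * a + b * b = a := by linear_combination a * htr - hdet
    have h₂ : a * b + b * d = b := by linear_combination b * htr
    have h₃ : b * a + d * b = b := by linear_combination b * htr
    have h₄ : b * b + d * d = d := by linear_combination d * htr - hdet
    simp only [mul_fin_two, ← Complex.ofReal_mul, ← Complex.ofReal_add, h₁, h₂, h₃, h₄]
  · simp only [trace_fin_two, of_apply, cons_val', cons_val_zero, cons_val_fin_one, cons_val_one]
    exact_mod_cast htr

theorem re_trace_mul_of_real (a b d a' b' d' : ℝ) :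
    (!![(a : ℂ), b; b, d] * !![(a' : ℂ), b'; b', d']).trace.re =
      a * a' + 2 * b * b' + d * d' := by
  rw [mul_fin_two, trace_fin_two]
  simp only [of_apply, cons_val', cons_val_zero, cons_val_one, cons_val_fin_one, Complex.add_re,
    Complex.mul_re, Complex.ofReal_re, Complex.ofReal_im]
  ring

theorem isDensity_half_smul_one : IsDensity ((2⁻¹ : ℂ) • (1 : Matrix (Fin 2) (Fin 2) ℂ)) :=
  ⟨PosSemidef.one.smul (by rw [Complex.nonneg_iff]; norm_num), by simp [trace_smul]⟩

section
variable {Λ : Type*} [MeasurableSpace Λ] {μ : Measure Λ} {g h : Λ → ℝ}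

theorem ae_eq_one_of_integral_eq_one [IsProbabilityMeasure μ] (hg : Integrable g μ)
    (hg1 : ∀ l, g l ≤ 1) (hint : ∫ l, g l ∂μ = 1) : g =ᵐ[μ] 1 := by
  have h0 : ∫ l, (1 - g l) ∂μ = 0 := by
    rw [integral_sub (integrable_const 1) hg, hint, integral_const, probReal_univ, one_smul,
      sub_self]
  filter_upwards [(integral_eq_zero_iff_of_nonneg (fun l => sub_nonneg.2 (hg1 l))
    ((integrable_const 1).sub hg)).1 h0] with l hl
  exact (sub_eq_zero.1 hl).symm

theorem integral_abs_sub_of_ae_eq_one [IsProbabilityMeasure μ] (hg : Integrable g μ)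
    (hg1 : ∀ l, g l ≤ 1) (hh : h =ᵐ[μ] 1) : ∫ l, |g l - h l| ∂μ = 1 - ∫ l, g l ∂μ := by
  have : (fun l => |g l - h l|) =ᵐ[μ] fun l => 1 - g l := by
    filter_upwards [hh] with l hl
    rw [hl, Pi.one_apply, abs_sub_comm, abs_of_nonneg (sub_nonneg.2 (hg1 l))]
  rw [integral_congr_ae this, integral_sub (integrable_const 1) hg, integral_const, probReal_univ,
    one_smul]

theorem integral_abs_sub_of_ae_eq_zero (hg0 : ∀ l, 0 ≤ g l) (hh : h =ᵐ[μ] 0) :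
    ∫ l, |g l - h l| ∂μ = ∫ l, g l ∂μ := by
  refine integral_congr_ae ?_
  filter_upwards [hh] with l hl
  rw [hl, Pi.zero_apply, sub_zero, abs_of_nonneg (hg0 l)]

end

structure ExpectationRepresentation (n : ℕ) (Λ : Type*) [MeasurableSpace Λ] where
  μ : Matrix (Fin n) (Fin n) ℂ → Measure Λ
  F : Matrix (Fin n) (Fin n) ℂ → Λ → ℝ
  isProbabilityMeasure : ∀ ρ, IsDensity ρ → IsProbabilityMeasure (μ ρ)
  convex : ∀ (p₁ p₂ : ℝ) (ρ₁ ρ₂ : Matrix (Fin n) (Fin n) ℂ),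
    0 ≤ p₁ → 0 ≤ p₂ → p₁ + p₂ = 1 → IsDensity ρ₁ → IsDensity ρ₂ →
    μ ((p₁ : ℂ) • ρ₁ + (p₂ : ℂ) • ρ₂) = ENNReal.ofReal p₁ • μ ρ₁ + ENNReal.ofReal p₂ • μ ρ₂
  measurable : ∀ E, IsRankOneProj E → Measurable (F E)
  mem_Icc : ∀ E, IsRankOneProj E → ∀ l, F E l ∈ Set.Icc (0 : ℝ) 1
  trace_eq : ∀ ρ E, IsDensity ρ → IsRankOneProj E →
    (ρ * E).trace = ((∫ l, F E l ∂(μ ρ) : ℝ) : ℂ)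

namespace ExpectationRepresentation

variable {Λ : Type*} [MeasurableSpace Λ]

section
variable {n : ℕ} {ρ E P : Matrix (Fin n) (Fin n) ℂ} (R : ExpectationRepresentation n Λ)

theorem integral_eq_re_trace (hρ : IsDensity ρ) (hE : IsRankOneProj E) :
    ∫ l, R.F E l ∂(R.μ ρ) = (ρ * E).trace.re := by
  rw [R.trace_eq ρ E hρ hE, Complex.ofReal_re]

theorem integrable (hE : IsRankOneProj E) (ν : Measure Λ) [IsFiniteMeasure ν] :
    Integrable (R.F E) ν :=
  .of_bound (R.measurable E hE).aestronglyMeasurable 1 <| .of_forall fun l => by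
    rw [Real.norm_eq_abs, abs_le]
    exact ⟨by linarith [(R.mem_Icc E hE l).1], (R.mem_Icc E hE l).2⟩

theorem integrable_abs_sub (hE : IsRankOneProj E) (hP : IsRankOneProj P) (ν : Measure Λ)
    [IsFiniteMeasure ν] : Integrable (fun l => |R.F E l - R.F P l|) ν :=
  ((R.integrable hE ν).sub (R.integrable hP ν)).abs

theorem ae_eq_one (hP : IsRankOneProj P) : R.F P =ᵐ[R.μ P] 1 :=
  have := R.isProbabilityMeasure P hP.isDensity
  ae_eq_one_of_integral_eq_one (R.integrable hP _) (fun l => (R.mem_Icc P hP l).2) <| by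
    rw [R.integral_eq_re_trace hP.isDensity hP, hP.2.1, hP.trace_eq_one, Complex.one_re]

theorem ae_eq_zero (hρ : IsDensity ρ) (hP : IsRankOneProj P) (h : (ρ * P).trace = 0) :
    R.F P =ᵐ[R.μ ρ] 0 :=
  have := R.isProbabilityMeasure ρ hρ
  (integral_eq_zero_iff_of_nonneg (fun l => (R.mem_Icc P hP l).1) (R.integrable hP _)).1 <| by
    rw [R.integral_eq_re_trace hρ hP, h, Complex.zero_re]

end

variable {A B C E P : Matrix (Fin 2) (Fin 2) ℂ}

theorem μ_half_smul_one (R : ExpectationRepresentation 2 Λ) (hP : IsRankOneProj P) :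
    R.μ ((2⁻¹ : ℂ) • 1) = ENNReal.ofReal 2⁻¹ • R.μ P + ENNReal.ofReal 2⁻¹ • R.μ (1 - P) := by
  have := R.convex 2⁻¹ 2⁻¹ P (1 - P) (by norm_num) (by norm_num) (by norm_num) hP.isDensity
    hP.isDensity_one_sub
  rwa [← smul_add, add_sub_cancel, Complex.ofReal_inv, Complex.ofReal_ofNat] at this

theorem integral_abs_sub (R : ExpectationRepresentation 2 Λ) (hE : IsRankOneProj E)
    (hP : IsRankOneProj P) :
    ∫ l, |R.F E l - R.F P l| ∂(R.μ ((2⁻¹ : ℂ) • 1)) = 1 - (P * E).trace.re := by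
  have := R.isProbabilityMeasure P hP.isDensity
  have := R.isProbabilityMeasure (1 - P) hP.isDensity_one_sub
  have hQE : (((1 - P) * E).trace).re = 1 - (P * E).trace.re := by
    rw [sub_mul, one_mul, trace_sub, hE.trace_eq_one, Complex.sub_re, Complex.one_re]
  rw [R.μ_half_smul_one hP,
    integral_add_measure ((R.integrable_abs_sub hE hP _).smul_measure ENNReal.ofReal_ne_top)
      ((R.integrable_abs_sub hE hP _).smul_measure ENNReal.ofReal_ne_top),
    integral_smul_measure, integral_smul_measure,
    integral_abs_sub_of_ae_eq_one (R.integrable hE _) (fun l => (R.mem_Icc E hE l).2)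
      (R.ae_eq_one hP),
    integral_abs_sub_of_ae_eq_zero (fun l => (R.mem_Icc E hE l).1)
      (R.ae_eq_zero hP.isDensity_one_sub hP
        (by rw [sub_mul, one_mul, hP.2.1, sub_self, trace_zero])),
    R.integral_eq_re_trace hP.isDensity hE, R.integral_eq_re_trace hP.isDensity_one_sub hE, hQE,
    ENNReal.toReal_ofReal (by norm_num), smul_eq_mul]
  ring

theorem re_trace_add_re_trace_le (R : ExpectationRepresentation 2 Λ) (hA : IsRankOneProj A)
    (hB : IsRankOneProj B) (hC : IsRankOneProj C) :
    (B * A).trace.re + (C * B).trace.re ≤ 1 + (C * A).trace.re := by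
  have := R.isProbabilityMeasure _ isDensity_half_smul_one
  have htri : ∫ l, |R.F A l - R.F C l| ∂(R.μ ((2⁻¹ : ℂ) • 1)) ≤
      ∫ l, |R.F A l - R.F B l| ∂(R.μ ((2⁻¹ : ℂ) • 1)) +
        ∫ l, |R.F B l - R.F C l| ∂(R.μ ((2⁻¹ : ℂ) • 1)) := by
    rw [← integral_add (R.integrable_abs_sub hA hB _) (R.integrable_abs_sub hB hC _)]
    exact integral_mono (R.integrable_abs_sub hA hC _)
      ((R.integrable_abs_sub hA hB _).add (R.integrable_abs_sub hB hC _))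
      fun l => abs_sub_le _ _ _
  rw [R.integral_abs_sub hA hB, R.integral_abs_sub hB hC, R.integral_abs_sub hA hC] at htri
  linarith

/-- The lines through `(1, 0)`, `(2, 1)` and `(1, 1)` are at "distances" `1 - Tr(PE)` equal to
`1/5`, `1/10` and `1/2 > 1/5 + 1/10`. -/
theorem isEmpty_two : IsEmpty (ExpectationRepresentation 2 Λ) := by
  refine ⟨fun R => ?_⟩
  have := R.re_trace_add_re_trace_le (isRankOneProj_of_real 1 0 0 (by norm_num) (by norm_num))
    (isRankOneProj_of_real (4 / 5) (2 / 5) (1 / 5) (by norm_num) (by norm_num))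
    (isRankOneProj_of_real (1 / 2) (1 / 2) (1 / 2) (by norm_num) (by norm_num))
  rw [re_trace_mul_of_real, re_trace_mul_of_real, re_trace_mul_of_real] at this
  norm_num at this

end ExpectationRepresentation

/-- There is no expectation representation for quantum systems described by ℂ². -/
theorem no_expectation_representation_dim_two :
    ¬ ∃ (Λ : Type) (_ : MeasurableSpace Λ)
        (μ : Matrix (Fin 2) (Fin 2) ℂ → Measure Λ)
        (F : Matrix (Fin 2) (Fin 2) ℂ → Λ → ℝ),
      (∀ ρ, IsDensity ρ → IsProbabilityMeasure (μ ρ)) ∧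
      (∀ (p₁ p₂ : ℝ) (ρ₁ ρ₂ : Matrix (Fin 2) (Fin 2) ℂ),
        0 ≤ p₁ → 0 ≤ p₂ → p₁ + p₂ = 1 → IsDensity ρ₁ → IsDensity ρ₂ →
        μ ((p₁ : ℂ) • ρ₁ + (p₂ : ℂ) • ρ₂)
          = ENNReal.ofReal p₁ • μ ρ₁ + ENNReal.ofReal p₂ • μ ρ₂) ∧
      (∀ E, IsRankOneProj E → Measurable (F E)) ∧
      (∀ E, IsRankOneProj E → ∀ l, F E l ∈ Set.Icc (0 : ℝ) 1) ∧
      (∀ ρ E, IsDensity ρ → IsRankOneProj E →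
        (ρ * E).trace = ((∫ l, F E l ∂(μ ρ) : ℝ) : ℂ)) := by
  rintro ⟨Λ, _, μ, F, hprob, hconvex, hmeas, hmem, htrace⟩
  exact ExpectationRepresentation.isEmpty_two.false ⟨μ, F, hprob, hconvex, hmeas, hmem, htrace⟩
end

section
/- Let H be a finite-dimensional complex Hilbert space of dimension at least 2. Then there is no expectation representation for quantum systems described by H: no triple (Λ, μ, F) with Λ a measurable space, μ convex-linear from density operators on H to probability measures on Λ, and F mapping rank-1 projections to measurable functions Λ → [0,1], satisfying Tr(ρE) = ∫_Λ F(E) dμ(ρ) for all density operators ρ and rank-1 projections E. -/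
/-! Fix orthonormal `e₀, e₁`, the unit vectors `u θ = cos θ • e₀ + sin θ • e₁` and their projections
`P θ`, and let `A θ = {F (P θ) ≥ 1}`. Since `∫ F (P θ) dμ (P θ) = 1`, the set `A θ` has full
`μ (P θ)`-measure, and by Markov `μ (P φ) (A θ) ≤ cos² (θ - φ)`. The mixed state
`½ (P θ + P (θ + π/2))` does not depend on `θ`, so by convex-linearity neither does the measure
`μ (P θ) + μ (P (θ + π/2))`; taking `θ = φ` shows that it gives `A θ \ A φ` mass at most
`sin² (θ - φ)`. Covering `A 0` by `A 0 \ A (π/6)`, `A (π/6) \ A (π/3)` and `A (π/3)` then gives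
`1 ≤ 1/4 + 1/4 + 1/4`. -/

open MeasureTheory

variable {H : Type*} [NormedAddCommGroup H] [InnerProductSpace ℂ H]

/-- Self-adjointness of an operator, stated via the inner product. -/
def IsSelfAdjointOp (T : H →L[ℂ] H) : Prop :=
  ∀ x y : H, inner ℂ (T x) y = (inner ℂ x (T y) : ℂ)

/-- A density operator: positive semidefinite Hermitian with trace 1. -/
def IsDensityOp (T : H →L[ℂ] H) : Prop :=
  IsSelfAdjointOp T ∧ (∀ x : H, 0 ≤ (inner ℂ (T x) x : ℂ).re) ∧
    LinearMap.trace ℂ H (T : H →ₗ[ℂ] H) = 1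

/-- A rank-1 projection: Hermitian idempotent of rank 1. -/
def IsRankOneProjOp (T : H →L[ℂ] H) : Prop :=
  IsSelfAdjointOp T ∧ T ∘L T = T ∧ LinearMap.rank (T : H →ₗ[ℂ] H) = 1

open InnerProductSpace Real
open scoped ENNReal

section Rotation

variable {Λ : Type*} [MeasurableSpace Λ] {ν : ℝ → Measure Λ} {A : ℝ → Set Λ}

lemma measure_add_diff_le_sin_sq (h_full : ∀ θ, ν θ (A θ)ᶜ = 0)
    (h_overlap : ∀ θ φ, ν φ (A θ) ≤ ENNReal.ofReal (cos (θ - φ) ^ 2)) (θ φ : ℝ) :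
    (ν φ + ν (φ + π / 2)) (A θ \ A φ) ≤ ENNReal.ofReal (sin (θ - φ) ^ 2) := by
  rw [Measure.add_apply, measure_mono_null (Set.sdiff_subset_compl _ _) (h_full φ), zero_add]
  calc ν (φ + π / 2) (A θ \ A φ) ≤ ν (φ + π / 2) (A θ) := measure_mono Set.sdiff_subset
    _ ≤ ENNReal.ofReal (cos (θ - (φ + π / 2)) ^ 2) := h_overlap _ _
    _ = ENNReal.ofReal (sin (θ - φ) ^ 2) := by rw [← sub_sub, cos_sub_pi_div_two]

theorem false_of_rotationInvariant_add [∀ θ, IsProbabilityMeasure (ν θ)]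
    (h_full : ∀ θ, ν θ (A θ)ᶜ = 0)
    (h_overlap : ∀ θ φ, ν φ (A θ) ≤ ENNReal.ofReal (cos (θ - φ) ^ 2))
    (h_add : ∀ θ φ, ν θ + ν (θ + π / 2) = ν φ + ν (φ + π / 2)) : False := by
  have h_cover : A 0 ⊆ (A 0 \ A (π / 6) ∪ A (π / 6) \ A (π / 3)) ∪ A (π / 3) := by
    intro l hl
    by_cases h3 : l ∈ A (π / 3)
    · exact Or.inr h3
    by_cases h6 : l ∈ A (π / 6)
    · exact Or.inl (Or.inr ⟨h6, h3⟩)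
    · exact Or.inl (Or.inl ⟨hl, h6⟩)
  have h_slice (θ φ : ℝ) : ν 0 (A θ \ A φ) ≤ ENNReal.ofReal (sin (θ - φ) ^ 2) := by
    refine le_trans ?_ (measure_add_diff_le_sin_sq h_full h_overlap θ φ)
    rw [h_add φ 0, Measure.add_apply]
    exact le_self_add
  have h_one_le : (1 : ℝ≥0∞) ≤ ENNReal.ofReal (3 / 4) :=
    calc (1 : ℝ≥0∞) = ν 0 Set.univ := measure_univ.symm
      _ ≤ ν 0 (A 0) := by simpa [h_full 0] using measure_univ_le_add_compl (μ := ν 0) (A 0)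
      _ ≤ ν 0 (A 0 \ A (π / 6)) + ν 0 (A (π / 6) \ A (π / 3)) + ν 0 (A (π / 3)) :=
        (measure_mono h_cover).trans <|
          (measure_union_le _ _).trans (add_le_add (measure_union_le _ _) le_rfl)
      _ ≤ ENNReal.ofReal (sin (0 - π / 6) ^ 2) + ENNReal.ofReal (sin (π / 6 - π / 3) ^ 2)
          + ENNReal.ofReal (cos (π / 3 - 0) ^ 2) := by
        gcongr
        · exact h_slice _ _
        · exact h_slice _ _
        · exact h_overlap _ _
      _ = ENNReal.ofReal (3 / 4) := by
        have : π / 6 - π / 3 = -(π / 6) := by ring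
        rw [zero_sub, this, sub_zero, sin_neg, sin_pi_div_six, cos_pi_div_three,
          ← ENNReal.ofReal_add (by positivity) (by positivity),
          ← ENNReal.ofReal_add (by positivity) (by positivity)]
        norm_num
  rw [ENNReal.one_le_ofReal] at h_one_le
  norm_num at h_one_le

end Rotation

section Measure

variable {Λ : Type*} [MeasurableSpace Λ] {ν : Measure Λ} {f : Λ → ℝ}

lemma measure_setOf_one_le_le_ofReal_integral (hf_nonneg : 0 ≤ᵐ[ν] f) (hf : Integrable f ν) :
    ν {l | 1 ≤ f l} ≤ ENNReal.ofReal (∫ l, f l ∂ν) := by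
  calc ν {l | 1 ≤ f l} = ν {l | 1 ≤ ENNReal.ofReal (f l)} := by simp_rw [ENNReal.one_le_ofReal]
    _ ≤ ∫⁻ l, ENNReal.ofReal (f l) ∂ν := by
      simpa using mul_meas_ge_le_lintegral₀ hf.aemeasurable.ennreal_ofReal 1
    _ = ENNReal.ofReal (∫ l, f l ∂ν) := (ofReal_integral_eq_lintegral_ofReal hf hf_nonneg).symm

lemma measure_compl_setOf_one_le_eq_zero [IsProbabilityMeasure ν] (hf_le : f ≤ᵐ[ν] 1)
    (hf : Integrable f ν) (h_int : ∫ l, f l ∂ν = 1) : ν {l | 1 ≤ f l}ᶜ = 0 := by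
  have h_sub : (fun l ↦ 1 - f l) =ᵐ[ν] 0 := by
    refine (integral_eq_zero_iff_of_nonneg_ae (hf_le.mono fun l hl ↦ sub_nonneg.2 hl)
      ((integrable_const 1).sub hf)).1 ?_
    simp [integral_sub (integrable_const 1) hf, h_int]
  exact mem_ae_iff.1 (h_sub.mono fun l hl ↦ by simp_all [sub_eq_zero])

end Measure

lemma exists_orthonormal_fin_of_le_finrank {𝕜 E : Type*} [RCLike 𝕜] [NormedAddCommGroup E]
    [InnerProductSpace 𝕜 E] [FiniteDimensional 𝕜 E] {n : ℕ} (h : n ≤ Module.finrank 𝕜 E) :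
    ∃ e : Fin n → E, Orthonormal 𝕜 e :=
  ⟨stdOrthonormalBasis 𝕜 E ∘ Fin.castLE h,
    (stdOrthonormalBasis 𝕜 E).orthonormal.comp _ (Fin.castLE_injective h)⟩

lemma isRankOneProjOp_rankOne_self {u : H} (hu : ‖u‖ = 1) : IsRankOneProjOp (rankOne ℂ u u) := by
  have hu0 : u ≠ 0 := norm_ne_zero_iff.1 (by rw [hu]; exact one_ne_zero)
  exact ⟨isSymmetric_rankOne_self u, isIdempotentElem_rankOne_self hu, rank_rankOne hu0 hu0⟩

lemma isDensityOp_rankOne_self [FiniteDimensional ℂ H] {u : H} (hu : ‖u‖ = 1) :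
    IsDensityOp (rankOne ℂ u u) :=
  ⟨isSymmetric_rankOne_self u, (isPositive_rankOne_self (𝕜 := ℂ) u).re_inner_nonneg_left, by
    rw [trace_rankOne, inner_self_eq_norm_sq_to_K, hu]; simp⟩

lemma trace_rankOne_self_comp_rankOne_self [FiniteDimensional ℂ H] (u v : H) :
    LinearMap.trace ℂ H ((rankOne ℂ v v ∘L rankOne ℂ u u : H →L[ℂ] H) : H →ₗ[ℂ] H)
      = ⟪v, u⟫_ℂ * ⟪u, v⟫_ℂ := by
  rw [rankOne_comp_rankOne, ContinuousLinearMap.toLinearMap_smul, map_smul, trace_rankOne,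
    smul_eq_mul]

section Circle

variable (e : Fin 2 → H)

noncomputable def circleVec (θ : ℝ) : H := (cos θ : ℂ) • e 0 + (sin θ : ℂ) • e 1

variable {e}

lemma inner_circleVec (he : Orthonormal ℂ e) (θ φ : ℝ) :
    ⟪circleVec e θ, circleVec e φ⟫_ℂ = (cos (θ - φ) : ℂ) := by
  simp only [circleVec, inner_add_left, inner_add_right, inner_smul_left, inner_smul_right,
    Complex.conj_ofReal, orthonormal_iff_ite.1 he]
  push_cast [cos_sub]
  ring

lemma norm_circleVec (he : Orthonormal ℂ e) (θ : ℝ) : ‖circleVec e θ‖ = 1 := by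
  rw [norm_eq_sqrt_re_inner (𝕜 := ℂ), inner_circleVec he, sub_self, cos_zero]
  simp

lemma rankOne_circleVec_add_rankOne_circleVec (θ : ℝ) :
    rankOne ℂ (circleVec e θ) (circleVec e θ)
        + rankOne ℂ (circleVec e (θ + π / 2)) (circleVec e (θ + π / 2))
      = rankOne ℂ (e 0) (e 0) + rankOne ℂ (e 1) (e 1) := by
  ext x
  have hcs := Complex.cos_sq_add_sin_sq θ
  simp only [circleVec, cos_add_pi_div_two, sin_add_pi_div_two, add_apply,
    rankOne_apply, inner_add_left, inner_smul_left, inner_neg_left, Complex.conj_ofReal,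
    Complex.ofReal_neg, smul_add, smul_smul, neg_smul]
  match_scalars
  · linear_combination ⟪e 0, x⟫_ℂ * hcs
  · linear_combination ⟪e 1, x⟫_ℂ * hcs

end Circle

/-- If `dim H ≥ 2`, there is no expectation representation for quantum systems
described by the finite-dimensional complex Hilbert space `H`. -/
theorem no_expectation_representation_of_two_le_dim
    [FiniteDimensional ℂ H] (hdim : 2 ≤ Module.finrank ℂ H) :
    ¬ ∃ (Λ : Type) (_ : MeasurableSpace Λ)
        (μ : (H →L[ℂ] H) → Measure Λ)
        (F : (H →L[ℂ] H) → Λ → ℝ),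
      (∀ ρ, IsDensityOp ρ → IsProbabilityMeasure (μ ρ)) ∧
      (∀ (p₁ p₂ : ℝ) (ρ₁ ρ₂ : H →L[ℂ] H),
        0 ≤ p₁ → 0 ≤ p₂ → p₁ + p₂ = 1 → IsDensityOp ρ₁ → IsDensityOp ρ₂ →
        μ ((p₁ : ℂ) • ρ₁ + (p₂ : ℂ) • ρ₂)
          = ENNReal.ofReal p₁ • μ ρ₁ + ENNReal.ofReal p₂ • μ ρ₂) ∧
      (∀ E, IsRankOneProjOp E → Measurable (F E)) ∧
      (∀ E, IsRankOneProjOp E → ∀ l, F E l ∈ Set.Icc (0 : ℝ) 1) ∧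
      (∀ ρ E, IsDensityOp ρ → IsRankOneProjOp E →
        LinearMap.trace ℂ H ((ρ ∘L E : H →L[ℂ] H) : H →ₗ[ℂ] H)
          = ((∫ l, F E l ∂(μ ρ) : ℝ) : ℂ)) := by
  rintro ⟨Λ, _, μ, F, hprob, hconv, hmeas, hF01, htr⟩
  obtain ⟨e, he⟩ := exists_orthonormal_fin_of_le_finrank hdim
  set P : ℝ → H →L[ℂ] H := fun θ ↦ rankOne ℂ (circleVec e θ) (circleVec e θ)
  have hP_proj θ : IsRankOneProjOp (P θ) := isRankOneProjOp_rankOne_self (norm_circleVec he θ)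
  have hP_dens θ : IsDensityOp (P θ) := isDensityOp_rankOne_self (norm_circleVec he θ)
  have hν θ : IsProbabilityMeasure (μ (P θ)) := hprob _ (hP_dens θ)
  have hF_int θ φ : Integrable (F (P θ)) (μ (P φ)) :=
    .of_mem_Icc 0 1 (hmeas _ (hP_proj θ)).aemeasurable (ae_of_all _ (hF01 _ (hP_proj θ)))
  have hF_integral θ φ : ∫ l, F (P θ) l ∂μ (P φ) = cos (θ - φ) ^ 2 := by
    have h := htr _ _ (hP_dens φ) (hP_proj θ)
    rw [trace_rankOne_self_comp_rankOne_self, inner_circleVec he, inner_circleVec he,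
      ← neg_sub, cos_neg] at h
    exact_mod_cast (h.symm.trans (sq _).symm)
  have hmix θ : ENNReal.ofReal (1 / 2) • (μ (P θ) + μ (P (θ + π / 2)))
      = μ (((1 / 2 : ℝ) : ℂ) • (rankOne ℂ (e 0) (e 0) + rankOne ℂ (e 1) (e 1))) := by
    rw [smul_add, ← hconv _ _ _ _ (by norm_num) (by norm_num) (by norm_num) (hP_dens _)
      (hP_dens _), ← smul_add, rankOne_circleVec_add_rankOne_circleVec]
  have h_half : IsUnit (ENNReal.ofReal (1 / 2)) := ENNReal.isUnit_iff.2 ⟨by norm_num, by simp⟩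
  refine false_of_rotationInvariant_add (ν := fun θ ↦ μ (P θ))
    (A := fun θ ↦ {l | 1 ≤ F (P θ) l}) (fun θ ↦ ?_) (fun θ φ ↦ ?_)
    (fun θ φ ↦ h_half.smul_left_cancel.1 ((hmix θ).trans (hmix φ).symm))
  · exact measure_compl_setOf_one_le_eq_zero (ae_of_all _ fun l ↦ (hF01 _ (hP_proj θ) l).2)
      (hF_int θ θ) (by rw [hF_integral, sub_self, cos_zero, one_pow])
  · exact (measure_setOf_one_le_le_ofReal_integral
      (ae_of_all _ fun l ↦ (hF01 _ (hP_proj θ) l).1) (hF_int θ φ)).trans_eq (by rw [hF_integral])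
end

section
/- There exists a value representation for quantum systems described by the two-dimensional complex Hilbert space. That is, there exist a probability space Λ and a family V assigning to each pure state |ψ⟩ and each λ ∈ Λ a valuation V_ψ^λ on all Hermitian operators of ℂ² (assigning to each Hermitian A one of its eigenvalues, compatibly with joint spectra of commuting operators), such that for every pure state ψ and every Hermitian operator A, ∫_Λ V_ψ^λ(A) dλ = ⟨ψ|A|ψ⟩. -/
/-!
A Hermitian `A` on `ℂ²` is `m • 1 + traceless x` with `m : ℝ` and `x = (u, c) : ℝ × ℂ`; its
eigenvalues are `m ± ‖x‖`, and two such matrices commute exactly when their `x` are real multiples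
of each other. Hence any choice `μ(x) = ±‖x‖` with `μ(τ • x) = τ * μ(x)` yields a valuation
`A ↦ m + μ(x)`: the eigenvector of `traceless x` for `μ(x)` is a joint eigenvector of `A` and of
every Hermitian matrix commuting with it.

To get the quantum averages, orient each line (`o(τ • x) = sign τ * o(x)`) and let the hidden
variable `t ∈ [0, 1]` choose `μ(x) = o(x) ‖x‖` if `t < (1 + o(x) β / ‖x‖) / 2` and `-o(x) ‖x‖`
otherwise, where `β = ⟪ψ, traceless x ψ⟫ ∈ [-‖x‖, ‖x‖]` pairs `x` with the Bloch vector of `ψ`.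
This threshold does not change when `x` is rescaled, so `μ` is homogeneous, and the average of
`m + μ(x)` over `t` is `m + β = ⟪ψ, A ψ⟫`.
-/

open Matrix MeasureTheory

/-- A valuation on all Hermitian operators of ℂ²: each Hermitian `A` gets one of its
eigenvalues, and commuting Hermitian operators get joint eigenvalues (realized by a
common nonzero eigenvector). -/
def IsQubitValuation (v : Matrix (Fin 2) (Fin 2) ℂ → ℝ) : Prop :=
  (∀ A : Matrix (Fin 2) (Fin 2) ℂ, A.IsHermitian → (v A : ℂ) ∈ spectrum ℂ A) ∧
  (∀ A B : Matrix (Fin 2) (Fin 2) ℂ, A.IsHermitian → B.IsHermitian → A * B = B * A →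
    ∃ φ : Fin 2 → ℂ, φ ≠ 0 ∧ A *ᵥ φ = (v A : ℂ) • φ ∧ B *ᵥ φ = (v B : ℂ) • φ)

lemma ite_lt_eq_indicator (α t : ℝ) :
    (if t < α then (1 : ℝ) else -1) = 2 * (Set.Iio α).indicator 1 t - 1 := by
  by_cases ht : t < α <;> norm_num [Set.indicator, ht]

lemma integral_Icc_ite_lt {α : ℝ} (h₀ : 0 ≤ α) (h₁ : α ≤ 1) :
    ∫ t in Set.Icc (0 : ℝ) 1, (if t < α then (1 : ℝ) else -1) = 2 * α - 1 := by
  have hvol : volume.real (Set.Iio α ∩ Set.Icc (0 : ℝ) 1) = α := by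
    have : Set.Iio α ∩ Set.Icc (0 : ℝ) 1 = Set.Ico 0 α := by
      ext t
      simp only [Set.mem_inter_iff, Set.mem_Iio, Set.mem_Icc, Set.mem_Ico]
      grind
    rw [this, Real.volume_real_Ico_of_le h₀, sub_zero]
  simp only [ite_lt_eq_indicator]
  rw [integral_sub, integral_const_mul, integral_indicator_one measurableSet_Iio,
    measureReal_restrict_apply measurableSet_Iio, hvol, integral_const]
  · simp
  · exact ((integrable_const 1).indicator measurableSet_Iio).const_mul 2
  · exact integrable_const 1

noncomputable section

namespace Qubit

open Complex ComplexConjugate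

def traceless (x : ℝ × ℂ) : Matrix (Fin 2) (Fin 2) ℂ :=
  !![(x.1 : ℂ), x.2; conj x.2, -(x.1 : ℂ)]

def mid (A : Matrix (Fin 2) (Fin 2) ℂ) : ℝ := ((A 0 0).re + (A 1 1).re) / 2

def tracelessPart (A : Matrix (Fin 2) (Fin 2) ℂ) : ℝ × ℂ :=
  (((A 0 0).re - (A 1 1).re) / 2, A 0 1)

lemma traceless_smul (τ : ℝ) (x : ℝ × ℂ) : traceless (τ • x) = (τ : ℂ) • traceless x := by
  ext i j
  fin_cases i <;> fin_cases j <;> simp [traceless, Complex.real_smul]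

lemma eq_mid_smul_one_add_traceless {A : Matrix (Fin 2) (Fin 2) ℂ} (hA : A.IsHermitian) :
    A = (mid A : ℂ) • 1 + traceless (tracelessPart A) := by
  have h00 : (A 0 0).im = 0 := by simpa using conj_eq_iff_im.mp (hA.apply 0 0)
  have h11 : (A 1 1).im = 0 := by simpa using conj_eq_iff_im.mp (hA.apply 1 1)
  have h10 := hA.apply 0 1
  ext i j
  fin_cases i <;> fin_cases j <;> apply Complex.ext <;>
    simp [mid, tracelessPart, traceless, h00, h11, ← h10] <;> ring

def radius (x : ℝ × ℂ) : ℝ := √(x.1 ^ 2 + normSq x.2)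

lemma sq_radius (x : ℝ × ℂ) : radius x ^ 2 = x.1 ^ 2 + normSq x.2 :=
  Real.sq_sqrt (add_nonneg (sq_nonneg _) (normSq_nonneg _))

lemma radius_smul (τ : ℝ) (x : ℝ × ℂ) : radius (τ • x) = |τ| * radius x := by
  rw [radius, radius, ← Real.sqrt_sq_eq_abs, ← Real.sqrt_mul (sq_nonneg τ)]
  congr 1
  simp only [Prod.smul_fst, smul_eq_mul, Prod.smul_snd, real_smul, normSq_mul, normSq_ofReal]
  ring

lemma radius_pos {x : ℝ × ℂ} (hx : x ≠ 0) : 0 < radius x := by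
  refine Real.sqrt_pos.mpr ?_
  by_contra! h
  apply hx
  have h1 : x.1 = 0 := by nlinarith [sq_nonneg x.1, normSq_nonneg x.2]
  have h2 : normSq x.2 = 0 := by nlinarith [sq_nonneg x.1, normSq_nonneg x.2]
  exact Prod.ext h1 (normSq_eq_zero.mp h2)

def eigvec (x : ℝ × ℂ) (μ : ℝ) : Fin 2 → ℂ :=
  if x.2 = 0 then (if μ = x.1 then ![1, 0] else ![0, 1]) else ![x.2, ((μ - x.1 : ℝ) : ℂ)]

lemma eigvec_ne_zero (x : ℝ × ℂ) (μ : ℝ) : eigvec x μ ≠ 0 := by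
  unfold eigvec
  split_ifs with hc
  · exact fun h => by simpa using congrFun h 0
  · exact fun h => by simpa using congrFun h 1
  · exact fun h => hc (by simpa using congrFun h 0)

lemma traceless_mulVec_eigvec {x : ℝ × ℂ} {μ : ℝ} (hμ : μ ^ 2 = x.1 ^ 2 + normSq x.2) :
    traceless x *ᵥ eigvec x μ = (μ : ℂ) • eigvec x μ := by
  unfold eigvec
  split_ifs with hc hu
  · ext i; fin_cases i <;> simp [traceless, hc, hu]
  · have : μ = -x.1 := by
      rw [hc, normSq_zero, add_zero, sq_eq_sq_iff_eq_or_eq_neg] at hμ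
      exact hμ.resolve_left hu
    ext i; fin_cases i <;> simp [traceless, hc, this]
  · have hnorm : x.2 * conj x.2 = (μ : ℂ) ^ 2 - (x.1 : ℂ) ^ 2 := by
      rw [mul_conj, eq_sub_of_add_eq' hμ.symm]; push_cast; ring
    ext i; fin_cases i <;> simp [traceless] <;> [ring; linear_combination hnorm]

lemma exists_eq_smul_of_commute {x y : ℝ × ℂ} (hx : x ≠ 0)
    (h : Commute (traceless x) (traceless y)) : ∃ τ : ℝ, y = τ • x := by
  have h00 := congrFun (congrFun h.eq 0) 0
  have h01 := congrFun (congrFun h.eq 0) 1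
  simp only [traceless, mul_fin_two, of_apply, cons_val', cons_val_zero, cons_val_one,
    cons_val_fin_one] at h00 h01
  have hcross : (x.1 : ℂ) * y.2 = y.1 * x.2 := by linear_combination h01 / 2
  by_cases hx1 : x.1 = 0
  · have hx2 : x.2 ≠ 0 := fun h => hx (Prod.ext hx1 h)
    have hy1 : y.1 = 0 := by
      simpa [hx1, hx2] using hcross.symm
    have hreal : conj (y.2 * conj x.2) = y.2 * conj x.2 := by
      rw [map_mul, conj_conj]; linear_combination h00
    refine ⟨(y.2 * conj x.2).re / normSq x.2, Prod.ext (by simp [hx1, hy1]) ?_⟩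
    have hconj : conj x.2 ≠ 0 := (map_ne_zero _).mpr hx2
    rw [Prod.smul_snd, real_smul, ofReal_div, conj_eq_iff_re.mp hreal, ← mul_conj]
    field_simp
  · refine ⟨y.1 / x.1, Prod.ext (by simp [hx1]) ?_⟩
    rw [Prod.smul_snd, real_smul, ofReal_div]
    field_simp [hx1]
    linear_combination hcross

lemma commute_traceless_of_commute {A B : Matrix (Fin 2) (Fin 2) ℂ} (hA : A.IsHermitian)
    (hB : B.IsHermitian) (h : Commute A B) :
    Commute (traceless (tracelessPart A)) (traceless (tracelessPart B)) := by
  have traceless_eq_sub : ∀ M : Matrix (Fin 2) (Fin 2) ℂ, M.IsHermitian →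
      traceless (tracelessPart M) = M - (mid M : ℂ) • 1 := fun M hM =>
    eq_sub_of_add_eq' (eq_mid_smul_one_add_traceless hM).symm
  rw [traceless_eq_sub A hA, traceless_eq_sub B hB]
  exact (h.sub_right ((Commute.one_right A).smul_right _)).sub_left
    (((Commute.one_left B).smul_left _).sub_right ((Commute.one_right _).smul_right _))

def orientation (x : ℝ × ℂ) : ℝ :=
  if x.1 ≠ 0 then SignType.sign x.1
  else if x.2.re ≠ 0 then SignType.sign x.2.re else SignType.sign x.2.im

lemma orientation_smul (τ : ℝ) (x : ℝ × ℂ) :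
    orientation (τ • x) = SignType.sign τ * orientation x := by
  rcases eq_or_ne τ 0 with rfl | hτ
  · simp [orientation]
  · simp only [orientation, Prod.smul_fst, Prod.smul_snd, smul_eq_mul, Complex.smul_re,
      Complex.smul_im, ne_eq, mul_eq_zero, hτ, false_or, sign_mul, SignType.coe_mul]
    split_ifs <;> rfl

lemma sq_orientation {x : ℝ × ℂ} (hx : x ≠ 0) : orientation x ^ 2 = 1 := by
  unfold orientation
  split_ifs with h1 h2
  · rcases lt_or_gt_of_ne h1 with h | h <;> simp [h]
  · rcases lt_or_gt_of_ne h2 with h | h <;> simp [h]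
  · have h3 : x.2.im ≠ 0 := fun h => hx (Prod.ext (not_not.mp h1) (Complex.ext (not_not.mp h2) h))
    rcases lt_or_gt_of_ne h3 with h | h <;> simp [h]

def bloch (ψ : Fin 2 → ℂ) (x : ℝ × ℂ) : ℝ :=
  x.1 * (normSq (ψ 0) - normSq (ψ 1)) + 2 * (x.2 * (conj (ψ 0) * ψ 1)).re

lemma bloch_smul (ψ : Fin 2 → ℂ) (τ : ℝ) (x : ℝ × ℂ) : bloch ψ (τ • x) = τ * bloch ψ x := by
  simp only [bloch, Prod.smul_fst, Prod.smul_snd, smul_eq_mul, real_smul, mul_assoc, re_ofReal_mul]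
  ring

lemma star_dotProduct_self (ψ : Fin 2 → ℂ) :
    star ψ ⬝ᵥ ψ = ((normSq (ψ 0) + normSq (ψ 1) : ℝ) : ℂ) := by
  simp [dotProduct, Fin.sum_univ_two, mul_comm (conj _), mul_conj]

lemma star_dotProduct_smul_one_add_traceless_mulVec (ψ : Fin 2 → ℂ) (a : ℝ) (x : ℝ × ℂ) :
    star ψ ⬝ᵥ (((a : ℂ) • 1 + traceless x) *ᵥ ψ) = a * (star ψ ⬝ᵥ ψ) + bloch ψ x := by
  rw [add_mulVec, smul_mulVec, one_mulVec, dotProduct_add, dotProduct_smul, smul_eq_mul, bloch,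
    ofReal_add, ← add_conj, star_dotProduct_self]
  simp only [dotProduct, Fin.sum_univ_two, traceless, mulVec, Pi.star_apply, RCLike.star_def,
    of_apply, cons_val', cons_val_zero, cons_val_one, cons_val_fin_one, empty_val', map_mul,
    conj_conj]
  push_cast
  rw [← mul_conj, ← mul_conj]
  ring

lemma abs_bloch_le_radius {ψ : Fin 2 → ℂ} (hψ : star ψ ⬝ᵥ ψ = 1) (x : ℝ × ℂ) :
    |bloch ψ x| ≤ radius x := by
  have hn : normSq (ψ 0) + normSq (ψ 1) = 1 := by
    exact_mod_cast (star_dotProduct_self ψ).symm.trans hψ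
  set q := conj (ψ 0) * ψ 1
  have hq : 4 * normSq q = 1 - (normSq (ψ 0) - normSq (ψ 1)) ^ 2 := by
    simp only [q, normSq_mul, normSq_conj]
    nlinarith
  refine Real.abs_le_sqrt ?_
  rw [bloch]
  set p := normSq (ψ 0) - normSq (ψ 1)
  rw [normSq_apply] at hq ⊢
  rw [mul_re]
  nlinarith [sq_nonneg (2 * q.re * x.1 - p * x.2.re), sq_nonneg (2 * q.im * x.1 + p * x.2.im),
    sq_nonneg (q.im * x.2.re + q.re * x.2.im)]

def threshold (ψ : Fin 2 → ℂ) (x : ℝ × ℂ) : ℝ :=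
  (1 + orientation x * bloch ψ x / radius x) / 2

lemma threshold_smul (ψ : Fin 2 → ℂ) {τ : ℝ} (hτ : τ ≠ 0) (x : ℝ × ℂ) :
    threshold ψ (τ • x) = threshold ψ x := by
  have hnum : (SignType.sign τ : ℝ) * orientation x * (τ * bloch ψ x)
      = |τ| * (orientation x * bloch ψ x) := by
    rw [← sign_mul_self τ]; ring
  rw [threshold, threshold, orientation_smul, bloch_smul, radius_smul, hnum,
    mul_div_mul_left _ _ (abs_ne_zero.mpr hτ)]

def chosenEigenvalue (ψ : Fin 2 → ℂ) (t : ℝ) (x : ℝ × ℂ) : ℝ :=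
  radius x * orientation x * if t < threshold ψ x then 1 else -1

lemma chosenEigenvalue_smul (ψ : Fin 2 → ℂ) (t τ : ℝ) (x : ℝ × ℂ) :
    chosenEigenvalue ψ t (τ • x) = τ * chosenEigenvalue ψ t x := by
  rcases eq_or_ne τ 0 with rfl | hτ
  · simp [chosenEigenvalue, radius]
  rw [chosenEigenvalue, chosenEigenvalue, threshold_smul ψ hτ, radius_smul, orientation_smul]
  linear_combination (radius x * orientation x * if t < threshold ψ x then 1 else -1) *
    abs_mul_sign τ

lemma sq_chosenEigenvalue (ψ : Fin 2 → ℂ) (t : ℝ) (x : ℝ × ℂ) :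
    chosenEigenvalue ψ t x ^ 2 = x.1 ^ 2 + normSq x.2 := by
  rcases eq_or_ne x 0 with rfl | hx
  · simp [chosenEigenvalue, radius]
  rw [chosenEigenvalue, mul_pow, mul_pow, sq_radius, sq_orientation hx]
  split_ifs <;> ring

lemma integral_chosenEigenvalue {ψ : Fin 2 → ℂ} (hψ : star ψ ⬝ᵥ ψ = 1) (x : ℝ × ℂ) :
    ∫ t in Set.Icc (0 : ℝ) 1, chosenEigenvalue ψ t x = bloch ψ x := by
  rcases eq_or_ne x 0 with rfl | hx
  · simp [chosenEigenvalue, radius, bloch]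
  have hr := radius_pos hx
  have ho := sq_orientation hx
  have hβ := abs_bloch_le_radius hψ x
  have hoβ : |orientation x * bloch ψ x / radius x| ≤ 1 := by
    rw [abs_div, abs_mul, abs_of_pos hr, div_le_one hr]
    nlinarith [abs_nonneg (orientation x), abs_nonneg (bloch ψ x), sq_abs (orientation x), hβ]
  obtain ⟨hlo, hhi⟩ := abs_le.mp hoβ
  simp only [chosenEigenvalue]
  rw [integral_const_mul,
    integral_Icc_ite_lt (by rw [threshold]; linarith) (by rw [threshold]; linarith), threshold]
  field_simp
  linear_combination (bloch ψ x) * ho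

def value (ψ : Fin 2 → ℂ) (t : ℝ) (A : Matrix (Fin 2) (Fin 2) ℂ) : ℝ :=
  mid A + chosenEigenvalue ψ t (tracelessPart A)

lemma mulVec_eigvec {A : Matrix (Fin 2) (Fin 2) ℂ} (hA : A.IsHermitian) {τ : ℝ} {x : ℝ × ℂ}
    (hx : tracelessPart A = τ • x) {μ : ℝ} (hμ : μ ^ 2 = x.1 ^ 2 + normSq x.2) :
    A *ᵥ eigvec x μ = ((mid A + τ * μ : ℝ) : ℂ) • eigvec x μ := by
  conv_lhs => rw [eq_mid_smul_one_add_traceless hA, hx, traceless_smul]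
  rw [add_mulVec, smul_mulVec, smul_mulVec, one_mulVec, traceless_mulVec_eigvec hμ, smul_smul,
    ← add_smul]
  norm_cast

lemma exists_joint_eigvec_of_tracelessPart_eq_smul {A B : Matrix (Fin 2) (Fin 2) ℂ}
    (hA : A.IsHermitian) (hB : B.IsHermitian) {τ : ℝ} (h : tracelessPart B = τ • tracelessPart A)
    (ψ : Fin 2 → ℂ) (t : ℝ) :
    ∃ φ : Fin 2 → ℂ, φ ≠ 0 ∧ A *ᵥ φ = (value ψ t A : ℂ) • φ ∧ B *ᵥ φ = (value ψ t B : ℂ) • φ := by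
  have hμ := sq_chosenEigenvalue ψ t (tracelessPart A)
  refine ⟨_, eigvec_ne_zero (tracelessPart A) (chosenEigenvalue ψ t (tracelessPart A)), ?_, ?_⟩
  · rw [mulVec_eigvec hA (one_smul ℝ _).symm hμ, one_mul, value]
  · rw [mulVec_eigvec hB h hμ, value, h, chosenEigenvalue_smul]

lemma isQubitValuation_value (ψ : Fin 2 → ℂ) (t : ℝ) : IsQubitValuation (value ψ t) := by
  refine ⟨fun A hA => ?_, fun A B hA hB hAB => ?_⟩
  · obtain ⟨φ, hφ, hAφ, -⟩ :=
      exists_joint_eigvec_of_tracelessPart_eq_smul hA hA (one_smul ℝ _).symm ψ t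
    rw [← spectrum_toLin', ← Module.End.hasEigenvalue_iff_mem_spectrum]
    exact Module.End.hasEigenvalue_of_hasEigenvector ⟨Module.End.mem_eigenspace_iff.mpr hAφ, hφ⟩
  · have hcomm := commute_traceless_of_commute hA hB hAB
    rcases eq_or_ne (tracelessPart A) 0 with hx | hx
    · obtain ⟨φ, hφ, hBφ, hAφ⟩ := exists_joint_eigvec_of_tracelessPart_eq_smul hB hA
        (by rw [hx, zero_smul] : tracelessPart A = (0 : ℝ) • tracelessPart B) ψ t
      exact ⟨φ, hφ, hAφ, hBφ⟩
    · obtain ⟨τ, hτ⟩ := exists_eq_smul_of_commute hx hcomm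
      exact exists_joint_eigvec_of_tracelessPart_eq_smul hA hB hτ ψ t

lemma integrable_chosenEigenvalue (ψ : Fin 2 → ℂ) (x : ℝ × ℂ) :
    Integrable (fun t => chosenEigenvalue ψ t x) (volume.restrict (Set.Icc 0 1)) := by
  simp only [chosenEigenvalue, ite_lt_eq_indicator]
  exact ((((integrable_const 1).indicator measurableSet_Iio).const_mul 2).sub
    (integrable_const 1)).const_mul _

lemma integral_value {ψ : Fin 2 → ℂ} (hψ : star ψ ⬝ᵥ ψ = 1) (A : Matrix (Fin 2) (Fin 2) ℂ) :
    ∫ t in Set.Icc (0 : ℝ) 1, value ψ t A = mid A + bloch ψ (tracelessPart A) := by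
  simp only [value]
  rw [integral_add (integrable_const _) (integrable_chosenEigenvalue ψ _),
    integral_chosenEigenvalue hψ, integral_const]
  simp

end Qubit

end

/-- Bell's theorem: there exists a value representation for quantum systems
described by the two-dimensional complex Hilbert space. -/
theorem exists_value_representation_dim_two :
    ∃ (Λ : Type) (_ : MeasurableSpace Λ) (P : Measure Λ) (_ : IsProbabilityMeasure P)
      (V : {ψ : Fin 2 → ℂ // star ψ ⬝ᵥ ψ = 1} → Λ → Matrix (Fin 2) (Fin 2) ℂ → ℝ),
      (∀ ψ lam, IsQubitValuation (V ψ lam)) ∧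
      (∀ (ψ : {ψ : Fin 2 → ℂ // star ψ ⬝ᵥ ψ = 1}) (A : Matrix (Fin 2) (Fin 2) ℂ),
        A.IsHermitian →
        ((∫ lam, V ψ lam A ∂P : ℝ) : ℂ) = star (ψ : Fin 2 → ℂ) ⬝ᵥ (A *ᵥ (ψ : Fin 2 → ℂ))) := by
  refine ⟨ℝ, inferInstance, volume.restrict (Set.Icc 0 1), ⟨by simp⟩,
    fun ψ => Qubit.value ψ, fun ψ => Qubit.isQubitValuation_value ψ, fun ψ A hA => ?_⟩
  conv_rhs => rw [Qubit.eq_mid_smul_one_add_traceless hA]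
  rw [Qubit.star_dotProduct_smul_one_add_traceless_mulVec, ψ.2, Qubit.integral_value ψ.2]
  push_cast
  ring
end

section
/- There exist a probability space Λ (namely the interval [−1/2, 1/2] with Lebesgue measure) and, for each unit vector ψ ∈ ℂ² and λ ∈ Λ, a sign s(ψ, λ, n̂) ∈ {+1, −1} defined for each unit vector n̂ ∈ ℝ³, such that for every ψ and every n̂: ∫_{−1/2}^{1/2} s(ψ, λ, n̂) dλ = ⟨ψ| (n̂ · σ⃗) |ψ⟩. -/
open Matrix MeasureTheory

noncomputable def sigmaX : Matrix (Fin 2) (Fin 2) ℂ := !![0, 1; 1, 0]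
noncomputable def sigmaY : Matrix (Fin 2) (Fin 2) ℂ := !![0, -Complex.I; Complex.I, 0]
noncomputable def sigmaZ : Matrix (Fin 2) (Fin 2) ℂ := !![1, 0; 0, -1]

/-- `n̂ · σ⃗` for a vector `n̂ ∈ ℝ³`. -/
noncomputable def nDotSigma (n : Fin 3 → ℝ) : Matrix (Fin 2) (Fin 2) ℂ :=
  (n 0 : ℂ) • sigmaX + (n 1 : ℂ) • sigmaY + (n 2 : ℂ) • sigmaZ

/-!
The expectation `⟨ψ|(n̂·σ⃗)|ψ⟩` is the real number `n̂ · r`, where `r` is the Bloch vector of `ψ`;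
for normalized `ψ`, `r` is a unit vector, so by Cauchy–Schwarz `e = n̂ · r ∈ [-1, 1]`. The sign
that is `-1` on `[-1/2, -e/2)` and `+1` on `[-e/2, 1/2]` then has integral exactly `e`.
-/

open ComplexConjugate

lemma abs_dotProduct_le_one {ι : Type*} [Fintype ι] {x y : ι → ℝ}
    (hx : ∑ i, x i ^ 2 = 1) (hy : ∑ i, y i ^ 2 = 1) : |x ⬝ᵥ y| ≤ 1 := by
  rw [← sq_le_one_iff_abs_le_one]
  simpa [dotProduct, hx, hy] using Finset.sum_mul_sq_le_sq_mul_sq Finset.univ x y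

lemma integral_Icc_ite_le {a b t : ℝ} (hat : a ≤ t) (htb : t ≤ b) :
    ∫ x in Set.Icc a b, (if t ≤ x then (1 : ℝ) else -1) = a + b - 2 * t := by
  have hstep : (fun x => if t ≤ x then (1 : ℝ) else -1)
      = fun x => (Set.Ici t).indicator (fun _ => 2) x - 1 := by
    ext x
    by_cases h : t ≤ x <;> norm_num [h]
  have hfin : volume (Set.Icc a b) ≠ ⊤ := by simp [Real.volume_Icc]
  have hone : IntegrableOn (fun _ => (1 : ℝ)) (Set.Icc a b) := integrableOn_const hfin
  have htwo : IntegrableOn ((Set.Ici t).indicator fun _ => (2 : ℝ)) (Set.Icc a b) :=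
    (integrableOn_const hfin).indicator measurableSet_Ici
  have hcut : Set.Icc a b ∩ Set.Ici t = Set.Icc t b := by
    ext x
    simp only [Set.mem_inter_iff, Set.mem_Icc, Set.mem_Ici]
    exact ⟨fun h => ⟨h.2, h.1.2⟩, fun h => ⟨⟨hat.trans h.1, h.2⟩, h.1⟩⟩
  rw [hstep, integral_sub htwo hone, setIntegral_indicator measurableSet_Ici, hcut]
  simp only [setIntegral_const, smul_eq_mul, Real.volume_real_Icc]
  rw [max_eq_left (by linarith), max_eq_left (by linarith)]
  ring

noncomputable def blochVector (ψ : Fin 2 → ℂ) : Fin 3 → ℝ :=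
  ![2 * (conj (ψ 0) * ψ 1).re, 2 * (conj (ψ 0) * ψ 1).im,
    Complex.normSq (ψ 0) - Complex.normSq (ψ 1)]

lemma star_dotProduct_nDotSigma_mulVec (ψ : Fin 2 → ℂ) (n : Fin 3 → ℝ) :
    star ψ ⬝ᵥ (nDotSigma n *ᵥ ψ) = ((n ⬝ᵥ blochVector ψ : ℝ) : ℂ) := by
  apply Complex.ext <;>
  simp [nDotSigma, sigmaX, sigmaY, sigmaZ, blochVector, dotProduct, mulVec, Fin.sum_univ_succ,
    Complex.normSq_apply] <;> ring

lemma star_dotProduct_self_fin_two (ψ : Fin 2 → ℂ) :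
    star ψ ⬝ᵥ ψ = ((Complex.normSq (ψ 0) + Complex.normSq (ψ 1) : ℝ) : ℂ) := by
  simp [dotProduct, Fin.sum_univ_two, Complex.normSq_eq_conj_mul_self]

lemma sum_blochVector_sq (ψ : Fin 2 → ℂ) :
    ∑ i, blochVector ψ i ^ 2 = (Complex.normSq (ψ 0) + Complex.normSq (ψ 1)) ^ 2 := by
  simp [blochVector, Fin.sum_univ_three, Complex.normSq_apply]
  ring

/-- The core of Bell's qubit hidden-variable model: with `Λ = [−1/2, 1/2]` under
Lebesgue measure, there are signs `s(ψ, λ, n̂) ∈ {+1, −1}` whose average over `λ`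
reproduces the quantum expectation `⟨ψ|(n̂·σ⃗)|ψ⟩` for every unit `ψ ∈ ℂ²` and every
unit `n̂ ∈ ℝ³`. -/
theorem bell_sign_model :
    ∃ s : (Fin 2 → ℂ) → ℝ → (Fin 3 → ℝ) → ℝ,
      ∀ (ψ : Fin 2 → ℂ), star ψ ⬝ᵥ ψ = 1 →
      ∀ (n : Fin 3 → ℝ), (n 0) ^ 2 + (n 1) ^ 2 + (n 2) ^ 2 = 1 →
        (∀ lam : ℝ, s ψ lam n = 1 ∨ s ψ lam n = -1) ∧
        ((∫ lam in Set.Icc (-(1 : ℝ)/2) (1/2), s ψ lam n : ℝ) : ℂ)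
          = star ψ ⬝ᵥ (nDotSigma n *ᵥ ψ) := by
  refine ⟨fun ψ lam n => if -(n ⬝ᵥ blochVector ψ) / 2 ≤ lam then 1 else -1,
    fun ψ hψ n hn => ⟨fun lam => ite_eq_or_eq _ _ _, ?_⟩⟩
  have hnormSq : Complex.normSq (ψ 0) + Complex.normSq (ψ 1) = 1 := by
    exact_mod_cast (star_dotProduct_self_fin_two ψ).symm.trans hψ
  have hbloch : ∑ i, blochVector ψ i ^ 2 = 1 := by rw [sum_blochVector_sq, hnormSq, one_pow]
  obtain ⟨hlo, hhi⟩ := abs_le.mp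
    (abs_dotProduct_le_one (by simpa [Fin.sum_univ_three] using hn) hbloch)
  rw [integral_Icc_ite_le (by linarith) (by linarith), star_dotProduct_nDotSigma_mulVec]
  congr 1
  ring
end

section
/- Let v be a function from the set of all orthogonal projections on ℂ³ to {0,1} such that for every orthonormal basis {e₁, e₂, e₃} of ℂ³, exactly one of v(P₁), v(P₂), v(P₃) equals 1, where Pᵢ is the projection onto the span of eᵢ. Then no such v exists. -/
open Matrix

private lemma ks_le1 {a b c : ℕ} (h : a + b + c = 1) : a ≤ 1 ∧ b ≤ 1 ∧ c ≤ 1 := by omega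
private lemma ks_one0 {a b c : ℕ} (h : a + b + c = 1) (ha : a = 1) : b = 0 ∧ c = 0 := by omega
private lemma ks_one1 {a b c : ℕ} (h : a + b + c = 1) (hb : b = 1) : a = 0 ∧ c = 0 := by omega
private lemma ks_one2 {a b c : ℕ} (h : a + b + c = 1) (hc : c = 1) : a = 0 ∧ b = 0 := by omega
private lemma ks_zero0 {a b c : ℕ} (h : a + b + c = 1) (hb : b = 0) (hc : c = 0) : a = 1 := by omega
private lemma ks_zero1 {a b c : ℕ} (h : a + b + c = 1) (ha : a = 0) (hc : c = 0) : b = 1 := by omega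
private lemma ks_zero2 {a b c : ℕ} (h : a + b + c = 1) (ha : a = 0) (hb : b = 0) : c = 1 := by omega
private lemma ks_conf01 {a b c : ℕ} (h : a + b + c = 1) (ha : a = 1) (hb : b = 1) : False := by omega
private lemma ks_conf02 {a b c : ℕ} (h : a + b + c = 1) (ha : a = 1) (hc : c = 1) : False := by omega
private lemma ks_conf12 {a b c : ℕ} (h : a + b + c = 1) (hb : b = 1) (hc : c = 1) : False := by omega
private lemma ks_conf {a b c : ℕ} (h : a + b + c = 1) (ha : a = 0) (hb : b = 0) (hc : c = 0) : False := by omega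

private lemma ks_s2 : Real.sqrt 2 * Real.sqrt 2 = 2 := Real.mul_self_sqrt (by norm_num)

noncomputable def ksu (w : Fin 3 → ℝ) (N : ℝ) : Fin 3 → ℂ :=
  fun k => ((w k / Real.sqrt N : ℝ) : ℂ)

private lemma ks_dot (w₁ w₂ : Fin 3 → ℝ) (N₁ N₂ : ℝ) :
    star (ksu w₁ N₁) ⬝ᵥ ksu w₂ N₂ =
      (((w₁ 0 * w₂ 0 + w₁ 1 * w₂ 1 + w₁ 2 * w₂ 2) / (Real.sqrt N₁ * Real.sqrt N₂) : ℝ) : ℂ) := by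
  simp only [ksu, dotProduct, Fin.sum_univ_three, Pi.star_apply, RCLike.star_def,
    Complex.conj_ofReal]
  push_cast
  ring

private lemma ks_dot_zero (w₁ w₂ : Fin 3 → ℝ) (N₁ N₂ : ℝ)
    (o : w₁ 0 * w₂ 0 + w₁ 1 * w₂ 1 + w₁ 2 * w₂ 2 = 0) :
    star (ksu w₁ N₁) ⬝ᵥ ksu w₂ N₂ = 0 := by
  rw [ks_dot, o, zero_div, Complex.ofReal_zero]

private lemma ks_dot_one (w : Fin 3 → ℝ) (N : ℝ) (h : 0 < N)
    (d : w 0 * w 0 + w 1 * w 1 + w 2 * w 2 = N) :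
    star (ksu w N) ⬝ᵥ ksu w N = 1 := by
  rw [ks_dot, d, Real.mul_self_sqrt h.le, div_self h.ne', Complex.ofReal_one]

private lemma ks_orth (w₁ w₂ w₃ : Fin 3 → ℝ) (N₁ N₂ N₃ : ℝ)
    (h₁ : 0 < N₁) (h₂ : 0 < N₂) (h₃ : 0 < N₃)
    (d₁ : w₁ 0 * w₁ 0 + w₁ 1 * w₁ 1 + w₁ 2 * w₁ 2 = N₁)
    (d₂ : w₂ 0 * w₂ 0 + w₂ 1 * w₂ 1 + w₂ 2 * w₂ 2 = N₂)
    (d₃ : w₃ 0 * w₃ 0 + w₃ 1 * w₃ 1 + w₃ 2 * w₃ 2 = N₃)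
    (o₁₂ : w₁ 0 * w₂ 0 + w₁ 1 * w₂ 1 + w₁ 2 * w₂ 2 = 0)
    (o₁₃ : w₁ 0 * w₃ 0 + w₁ 1 * w₃ 1 + w₁ 2 * w₃ 2 = 0)
    (o₂₃ : w₂ 0 * w₃ 0 + w₂ 1 * w₃ 1 + w₂ 2 * w₃ 2 = 0) :
    ∀ i j, star (![ksu w₁ N₁, ksu w₂ N₂, ksu w₃ N₃] i) ⬝ᵥ
        (![ksu w₁ N₁, ksu w₂ N₂, ksu w₃ N₃] j) = if i = j then 1 else 0 := by
  have g₁₁ := ks_dot_one w₁ N₁ h₁ d₁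
  have g₂₂ := ks_dot_one w₂ N₂ h₂ d₂
  have g₃₃ := ks_dot_one w₃ N₃ h₃ d₃
  have g₁₂ := ks_dot_zero w₁ w₂ N₁ N₂ o₁₂
  have g₁₃ := ks_dot_zero w₁ w₃ N₁ N₃ o₁₃
  have g₂₃ := ks_dot_zero w₂ w₃ N₂ N₃ o₂₃
  have g₂₁ := ks_dot_zero w₂ w₁ N₂ N₁ (by linear_combination o₁₂)
  have g₃₁ := ks_dot_zero w₃ w₁ N₃ N₁ (by linear_combination o₁₃)
  have g₃₂ := ks_dot_zero w₃ w₂ N₃ N₂ (by linear_combination o₂₃)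
  intro i j
  fin_cases i <;> fin_cases j <;>
    simp [g₁₁, g₁₂, g₁₃, g₂₁, g₂₂, g₂₃, g₃₁, g₃₂, g₃₃]

private lemma ks_count (v : Matrix (Fin 3) (Fin 3) ℂ → ℝ) (f g k : Fin 3 → ℂ)
    (h : ∃! i : Fin 3, v (vecMulVec (![f, g, k] i) (star (![f, g, k] i))) = 1) :
    (if v (vecMulVec f (star f)) = 1 then 1 else 0 : ℕ)
      + (if v (vecMulVec g (star g)) = 1 then 1 else 0)
      + (if v (vecMulVec k (star k)) = 1 then 1 else 0) = 1 := by
  obtain ⟨i, hi, hu⟩ := h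
  have h0 := hu 0
  have h1 := hu 1
  have h2 := hu 2
  simp only [Matrix.cons_val_zero, Matrix.cons_val_one, Matrix.head_cons,
    Matrix.cons_val_two, Matrix.tail_cons] at h0 h1 h2
  fin_cases i <;>
    simp only [Matrix.cons_val_zero, Matrix.cons_val_one, Matrix.head_cons,
      Matrix.cons_val_two, Matrix.tail_cons, Fin.mk_zero, Fin.mk_one] at hi
  · rw [if_pos hi, if_neg (fun hq => by simpa using h1 hq),
      if_neg (fun hq => by simpa using h2 hq)]
  · rw [if_neg (fun hq => by simpa using h0 hq), if_pos hi,
      if_neg (fun hq => by simpa using h2 hq)]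
  · have hi' : v (vecMulVec k (star k)) = 1 := hi
    rw [if_neg (fun hq => by simpa using h0 hq), if_neg (fun hq => by simpa using h1 hq),
      if_pos hi']

private theorem peres_core (n0 n1 n2 n3 n4 n5 n6 n7 n8 n10 n12 n15 n18 n19 n20 n21 n22 n25 n28 n30 n32 n33 n34 n35 n37 n39 n40 n41 n42 n44 n46 n47 n48 n49 n50 n51 n52 n53 n54 n55 n56 n57 n58 n59 n60 n61 n62 n63 n64 n65 n66 n67 n68 n69 n70 n71 n72 : ℕ)
    (h0 : n0 + n3 + n20 = 1)
    (h1 : n0 + n10 + n44 = 1)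
    (h2 : n0 + n15 + n25 = 1)
    (h3 : n0 + n30 + n37 = 1)
    (h4 : n1 + n7 + n20 = 1)
    (h5 : n2 + n4 + n20 = 1)
    (h6 : n2 + n8 + n32 = 1)
    (h7 : n3 + n18 + n41 = 1)
    (h8 : n3 + n19 + n21 = 1)
    (h9 : n3 + n22 + n40 = 1)
    (h10 : n4 + n12 + n28 = 1)
    (h11 : n5 + n6 + n20 = 1)
    (h12 : n15 + n47 + n48 = 1)
    (h13 : n19 + n39 + n46 = 1)
    (h14 : n21 + n35 + n42 = 1)
    (h15 : n25 + n33 + n34 = 1)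
    (h16 : n1 + n33 + n49 = 1)
    (h17 : n1 + n48 + n50 = 1)
    (h18 : n5 + n34 + n51 = 1)
    (h19 : n5 + n47 + n52 = 1)
    (h20 : n6 + n35 + n53 = 1)
    (h21 : n6 + n46 + n54 = 1)
    (h22 : n7 + n39 + n55 = 1)
    (h23 : n7 + n42 + n56 = 1)
    (h24 : n8 + n41 + n57 = 1)
    (h25 : n8 + n44 + n58 = 1)
    (h26 : n10 + n42 + n59 = 1)
    (h27 : n10 + n46 + n60 = 1)
    (h28 : n12 + n40 + n61 = 1)
    (h29 : n12 + n44 + n62 = 1)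
    (h30 : n18 + n34 + n63 = 1)
    (h31 : n18 + n48 + n64 = 1)
    (h32 : n22 + n33 + n65 = 1)
    (h33 : n22 + n47 + n66 = 1)
    (h34 : n28 + n37 + n67 = 1)
    (h35 : n28 + n41 + n68 = 1)
    (h36 : n30 + n35 + n69 = 1)
    (h37 : n30 + n39 + n70 = 1)
    (h38 : n32 + n37 + n71 = 1)
    (h39 : n32 + n40 + n72 = 1)
    : False := by
  rcases Nat.le_one_iff_eq_zero_or_eq_one.mp (ks_le1 h0).1 with f0 | f0
  · rcases Nat.le_one_iff_eq_zero_or_eq_one.mp (ks_le1 h0).2.1 with f3 | f3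
    · have f20 := ks_zero2 h0 f0 f3
      obtain ⟨f1, f7⟩ := ks_one2 h4 f20
      obtain ⟨f2, f4⟩ := ks_one2 h5 f20
      obtain ⟨f5, f6⟩ := ks_one2 h11 f20
      rcases Nat.le_one_iff_eq_zero_or_eq_one.mp (ks_le1 h6).2.1 with f8 | f8
      · have f32 := ks_zero2 h6 f2 f8
        obtain ⟨f37, f71⟩ := ks_one0 h38 f32
        obtain ⟨f40, f72⟩ := ks_one0 h39 f32
        have f30 := ks_zero1 h3 f0 f37
        have f22 := ks_zero1 h9 f3 f40
        obtain ⟨f33, f65⟩ := ks_one0 h32 f22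
        obtain ⟨f47, f66⟩ := ks_one0 h33 f22
        obtain ⟨f35, f69⟩ := ks_one0 h36 f30
        obtain ⟨f39, f70⟩ := ks_one0 h37 f30
        have f49 := ks_zero2 h16 f1 f33
        have f52 := ks_zero2 h19 f5 f47
        have f53 := ks_zero2 h20 f6 f35
        have f55 := ks_zero2 h22 f7 f39
        rcases Nat.le_one_iff_eq_zero_or_eq_one.mp (ks_le1 h1).2.1 with f10 | f10
        · have f44 := ks_zero2 h1 f0 f10
          obtain ⟨-, f58⟩ := ks_one1 h25 f44
          obtain ⟨f12, f62⟩ := ks_one1 h29 f44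
          have f28 := ks_zero2 h10 f4 f12
          have f61 := ks_zero2 h28 f12 f40
          obtain ⟨-, f67⟩ := ks_one0 h34 f28
          obtain ⟨f41, f68⟩ := ks_one0 h35 f28
          have f18 := ks_zero1 h7 f3 f41
          have f57 := ks_zero2 h24 f8 f41
          obtain ⟨f34, f63⟩ := ks_one0 h30 f18
          obtain ⟨f48, f64⟩ := ks_one0 h31 f18
          have f15 := ks_zero0 h12 f47 f48
          have f25 := ks_zero0 h15 f33 f34
          have f50 := ks_zero2 h17 f1 f48
          have f51 := ks_zero2 h18 f5 f34
          exact ks_conf12 h2 f15 f25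
        · obtain ⟨-, f44⟩ := ks_one1 h1 f10
          have f58 := ks_zero2 h25 f8 f44
          obtain ⟨f42, f59⟩ := ks_one0 h26 f10
          obtain ⟨f46, f60⟩ := ks_one0 h27 f10
          have f19 := ks_zero0 h13 f39 f46
          have f21 := ks_zero0 h14 f35 f42
          have f54 := ks_zero2 h21 f6 f46
          have f56 := ks_zero2 h23 f7 f42
          exact ks_conf12 h8 f19 f21
      · obtain ⟨-, f32⟩ := ks_one1 h6 f8
        obtain ⟨f41, f57⟩ := ks_one0 h24 f8
        obtain ⟨f44, f58⟩ := ks_one0 h25 f8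
        have f10 := ks_zero1 h1 f0 f44
        have f18 := ks_zero1 h7 f3 f41
        obtain ⟨f42, f59⟩ := ks_one0 h26 f10
        obtain ⟨f46, f60⟩ := ks_one0 h27 f10
        obtain ⟨f34, f63⟩ := ks_one0 h30 f18
        obtain ⟨f48, f64⟩ := ks_one0 h31 f18
        have f50 := ks_zero2 h17 f1 f48
        have f51 := ks_zero2 h18 f5 f34
        have f54 := ks_zero2 h21 f6 f46
        have f56 := ks_zero2 h23 f7 f42
        rcases Nat.le_one_iff_eq_zero_or_eq_one.mp (ks_le1 h10).2.1 with f12 | f12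
        · have f28 := ks_zero2 h10 f4 f12
          have f62 := ks_zero2 h29 f12 f44
          obtain ⟨f37, f67⟩ := ks_one0 h34 f28
          obtain ⟨-, f68⟩ := ks_one0 h35 f28
          have f71 := ks_zero2 h38 f32 f37
          have f30 := ks_zero1 h3 f0 f37
          obtain ⟨f35, f69⟩ := ks_one0 h36 f30
          obtain ⟨f39, f70⟩ := ks_one0 h37 f30
          have f19 := ks_zero0 h13 f39 f46
          have f21 := ks_zero0 h14 f35 f42
          have f53 := ks_zero2 h20 f6 f35
          have f55 := ks_zero2 h22 f7 f39
          exact ks_conf12 h8 f19 f21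
        · obtain ⟨-, f28⟩ := ks_one1 h10 f12
          obtain ⟨f40, f61⟩ := ks_one0 h28 f12
          obtain ⟨-, f62⟩ := ks_one0 h29 f12
          have f68 := ks_zero2 h35 f28 f41
          have f72 := ks_zero2 h39 f32 f40
          have f22 := ks_zero1 h9 f3 f40
          obtain ⟨f33, f65⟩ := ks_one0 h32 f22
          obtain ⟨f47, f66⟩ := ks_one0 h33 f22
          have f15 := ks_zero0 h12 f47 f48
          have f25 := ks_zero0 h15 f33 f34
          have f49 := ks_zero2 h16 f1 f33
          have f52 := ks_zero2 h19 f5 f47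
          exact ks_conf12 h2 f15 f25
    · obtain ⟨-, f20⟩ := ks_one1 h0 f3
      obtain ⟨f18, f41⟩ := ks_one0 h7 f3
      obtain ⟨f19, f21⟩ := ks_one0 h8 f3
      obtain ⟨f22, f40⟩ := ks_one0 h9 f3
      rcases Nat.le_one_iff_eq_zero_or_eq_one.mp (ks_le1 h4).1 with f1 | f1
      · have f7 := ks_zero1 h4 f1 f20
        obtain ⟨f39, f55⟩ := ks_one0 h22 f7
        obtain ⟨f42, f56⟩ := ks_one0 h23 f7
        have f46 := ks_zero2 h13 f19 f39
        have f35 := ks_zero1 h14 f21 f42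
        obtain ⟨f6, f53⟩ := ks_one1 h20 f35
        obtain ⟨-, f54⟩ := ks_one1 h21 f46
        obtain ⟨f10, f60⟩ := ks_one1 h27 f46
        obtain ⟨f30, f69⟩ := ks_one1 h36 f35
        have f70 := ks_zero2 h37 f30 f39
        have f44 := ks_zero2 h1 f0 f10
        have f37 := ks_zero2 h3 f0 f30
        have f5 := ks_zero0 h11 f6 f20
        obtain ⟨f34, f51⟩ := ks_one0 h18 f5
        obtain ⟨f47, f52⟩ := ks_one0 h19 f5
        obtain ⟨f8, f58⟩ := ks_one1 h25 f44
        have f59 := ks_zero2 h26 f10 f42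
        obtain ⟨f12, f62⟩ := ks_one1 h29 f44
        have f63 := ks_zero2 h30 f18 f34
        have f66 := ks_zero2 h33 f22 f47
        obtain ⟨f28, f67⟩ := ks_one1 h34 f37
        have f68 := ks_zero2 h35 f28 f41
        obtain ⟨f32, f71⟩ := ks_one1 h38 f37
        have f72 := ks_zero2 h39 f32 f40
        have f2 := ks_zero0 h6 f8 f32
        have f4 := ks_zero0 h10 f12 f28
        have f57 := ks_zero2 h24 f8 f41
        have f61 := ks_zero2 h28 f12 f40
        exact ks_conf01 h5 f2 f4
      · obtain ⟨f7, -⟩ := ks_one0 h4 f1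
        obtain ⟨f33, f49⟩ := ks_one0 h16 f1
        obtain ⟨f48, f50⟩ := ks_one0 h17 f1
        have f64 := ks_zero2 h31 f18 f48
        have f65 := ks_zero2 h32 f22 f33
        rcases Nat.le_one_iff_eq_zero_or_eq_one.mp (ks_le1 h11).1 with f5 | f5
        · have f6 := ks_zero1 h11 f5 f20
          obtain ⟨f35, f53⟩ := ks_one0 h20 f6
          obtain ⟨f46, f54⟩ := ks_one0 h21 f6
          have f39 := ks_zero1 h13 f19 f46
          have f42 := ks_zero2 h14 f21 f35
          obtain ⟨-, f55⟩ := ks_one1 h22 f39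
          obtain ⟨-, f56⟩ := ks_one1 h23 f42
          obtain ⟨f10, f59⟩ := ks_one1 h26 f42
          have f60 := ks_zero2 h27 f10 f46
          obtain ⟨f30, f70⟩ := ks_one1 h37 f39
          have f44 := ks_zero2 h1 f0 f10
          have f37 := ks_zero2 h3 f0 f30
          obtain ⟨f8, f58⟩ := ks_one1 h25 f44
          obtain ⟨f12, f62⟩ := ks_one1 h29 f44
          obtain ⟨f28, f67⟩ := ks_one1 h34 f37
          have f68 := ks_zero2 h35 f28 f41
          have f69 := ks_zero2 h36 f30 f35
          obtain ⟨f32, f71⟩ := ks_one1 h38 f37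
          have f72 := ks_zero2 h39 f32 f40
          have f2 := ks_zero0 h6 f8 f32
          have f4 := ks_zero0 h10 f12 f28
          have f57 := ks_zero2 h24 f8 f41
          have f61 := ks_zero2 h28 f12 f40
          exact ks_conf01 h5 f2 f4
        · obtain ⟨f6, -⟩ := ks_one0 h11 f5
          obtain ⟨f34, f51⟩ := ks_one0 h18 f5
          obtain ⟨f47, f52⟩ := ks_one0 h19 f5
          have f63 := ks_zero2 h30 f18 f34
          have f66 := ks_zero2 h33 f22 f47
          have f15 := ks_zero0 h12 f47 f48
          have f25 := ks_zero0 h15 f33 f34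
          exact ks_conf12 h2 f15 f25
  · obtain ⟨f3, f20⟩ := ks_one0 h0 f0
    obtain ⟨f10, f44⟩ := ks_one0 h1 f0
    obtain ⟨f15, f25⟩ := ks_one0 h2 f0
    obtain ⟨f30, f37⟩ := ks_one0 h3 f0
    rcases Nat.le_one_iff_eq_zero_or_eq_one.mp (ks_le1 h4).1 with f1 | f1
    · have f7 := ks_zero1 h4 f1 f20
      obtain ⟨f39, f55⟩ := ks_one0 h22 f7
      obtain ⟨f42, f56⟩ := ks_one0 h23 f7
      have f59 := ks_zero2 h26 f10 f42
      have f70 := ks_zero2 h37 f30 f39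
      rcases Nat.le_one_iff_eq_zero_or_eq_one.mp (ks_le1 h11).1 with f5 | f5
      · have f6 := ks_zero1 h11 f5 f20
        obtain ⟨f35, f53⟩ := ks_one0 h20 f6
        obtain ⟨f46, f54⟩ := ks_one0 h21 f6
        have f60 := ks_zero2 h27 f10 f46
        have f69 := ks_zero2 h36 f30 f35
        have f19 := ks_zero0 h13 f39 f46
        have f21 := ks_zero0 h14 f35 f42
        exact ks_conf12 h8 f19 f21
      · obtain ⟨f6, -⟩ := ks_one0 h11 f5
        obtain ⟨f34, f51⟩ := ks_one0 h18 f5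
        obtain ⟨f47, f52⟩ := ks_one0 h19 f5
        have f48 := ks_zero2 h12 f15 f47
        have f33 := ks_zero1 h15 f25 f34
        obtain ⟨-, f49⟩ := ks_one1 h16 f33
        obtain ⟨-, f50⟩ := ks_one1 h17 f48
        obtain ⟨f18, f64⟩ := ks_one1 h31 f48
        obtain ⟨f22, f65⟩ := ks_one1 h32 f33
        have f66 := ks_zero2 h33 f22 f47
        have f41 := ks_zero2 h7 f3 f18
        have f40 := ks_zero2 h9 f3 f22
        obtain ⟨f8, f57⟩ := ks_one1 h24 f41
        have f58 := ks_zero2 h25 f8 f44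
        obtain ⟨f12, f61⟩ := ks_one1 h28 f40
        have f62 := ks_zero2 h29 f12 f44
        have f63 := ks_zero2 h30 f18 f34
        obtain ⟨f28, f68⟩ := ks_one1 h35 f41
        obtain ⟨f32, f72⟩ := ks_one1 h39 f40
        have f2 := ks_zero0 h6 f8 f32
        have f4 := ks_zero0 h10 f12 f28
        have f67 := ks_zero2 h34 f28 f37
        have f71 := ks_zero2 h38 f32 f37
        exact ks_conf01 h5 f2 f4
    · obtain ⟨f7, -⟩ := ks_one0 h4 f1
      obtain ⟨f33, f49⟩ := ks_one0 h16 f1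
      obtain ⟨f48, f50⟩ := ks_one0 h17 f1
      have f47 := ks_zero1 h12 f15 f48
      have f34 := ks_zero2 h15 f25 f33
      obtain ⟨f5, f51⟩ := ks_one1 h18 f34
      obtain ⟨-, f52⟩ := ks_one1 h19 f47
      obtain ⟨f18, f63⟩ := ks_one1 h30 f34
      have f64 := ks_zero2 h31 f18 f48
      obtain ⟨f22, f66⟩ := ks_one1 h33 f47
      have f41 := ks_zero2 h7 f3 f18
      have f40 := ks_zero2 h9 f3 f22
      have f6 := ks_zero1 h11 f5 f20
      obtain ⟨f35, f53⟩ := ks_one0 h20 f6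
      obtain ⟨f46, f54⟩ := ks_one0 h21 f6
      obtain ⟨f8, f57⟩ := ks_one1 h24 f41
      have f58 := ks_zero2 h25 f8 f44
      have f60 := ks_zero2 h27 f10 f46
      obtain ⟨f12, f61⟩ := ks_one1 h28 f40
      have f62 := ks_zero2 h29 f12 f44
      have f65 := ks_zero2 h32 f22 f33
      obtain ⟨f28, f68⟩ := ks_one1 h35 f41
      have f69 := ks_zero2 h36 f30 f35
      obtain ⟨f32, f72⟩ := ks_one1 h39 f40
      have f2 := ks_zero0 h6 f8 f32
      have f4 := ks_zero0 h10 f12 f28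
      have f67 := ks_zero2 h34 f28 f37
      have f71 := ks_zero2 h38 f32 f37
      exact ks_conf01 h5 f2 f4

noncomputable def ksw0 : Fin 3 → ℝ := ![(0 : ℝ), (0 : ℝ), (1 : ℝ)]
noncomputable def ksw1 : Fin 3 → ℝ := ![(0 : ℝ), ((1 : ℝ) * Real.sqrt 2), (-1 : ℝ)]
noncomputable def ksw2 : Fin 3 → ℝ := ![(0 : ℝ), (1 : ℝ), (-1 : ℝ)]
noncomputable def ksw3 : Fin 3 → ℝ := ![(0 : ℝ), (1 : ℝ), (0 : ℝ)]
noncomputable def ksw4 : Fin 3 → ℝ := ![(0 : ℝ), (1 : ℝ), (1 : ℝ)]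
noncomputable def ksw5 : Fin 3 → ℝ := ![(0 : ℝ), ((1 : ℝ) * Real.sqrt 2), (1 : ℝ)]
noncomputable def ksw6 : Fin 3 → ℝ := ![(0 : ℝ), (1 : ℝ), ((-1 : ℝ) * Real.sqrt 2)]
noncomputable def ksw7 : Fin 3 → ℝ := ![(0 : ℝ), (1 : ℝ), ((1 : ℝ) * Real.sqrt 2)]
noncomputable def ksw8 : Fin 3 → ℝ := ![((1 : ℝ) * Real.sqrt 2), (-1 : ℝ), (-1 : ℝ)]
noncomputable def ksw10 : Fin 3 → ℝ := ![((1 : ℝ) * Real.sqrt 2), (-1 : ℝ), (0 : ℝ)]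
noncomputable def ksw12 : Fin 3 → ℝ := ![((1 : ℝ) * Real.sqrt 2), (-1 : ℝ), (1 : ℝ)]
noncomputable def ksw15 : Fin 3 → ℝ := ![(1 : ℝ), (-1 : ℝ), (0 : ℝ)]
noncomputable def ksw18 : Fin 3 → ℝ := ![((1 : ℝ) * Real.sqrt 2), (0 : ℝ), (-1 : ℝ)]
noncomputable def ksw19 : Fin 3 → ℝ := ![(1 : ℝ), (0 : ℝ), (-1 : ℝ)]
noncomputable def ksw20 : Fin 3 → ℝ := ![(1 : ℝ), (0 : ℝ), (0 : ℝ)]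
noncomputable def ksw21 : Fin 3 → ℝ := ![(1 : ℝ), (0 : ℝ), (1 : ℝ)]
noncomputable def ksw22 : Fin 3 → ℝ := ![((1 : ℝ) * Real.sqrt 2), (0 : ℝ), (1 : ℝ)]
noncomputable def ksw25 : Fin 3 → ℝ := ![(1 : ℝ), (1 : ℝ), (0 : ℝ)]
noncomputable def ksw28 : Fin 3 → ℝ := ![((1 : ℝ) * Real.sqrt 2), (1 : ℝ), (-1 : ℝ)]
noncomputable def ksw30 : Fin 3 → ℝ := ![((1 : ℝ) * Real.sqrt 2), (1 : ℝ), (0 : ℝ)]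
noncomputable def ksw32 : Fin 3 → ℝ := ![((1 : ℝ) * Real.sqrt 2), (1 : ℝ), (1 : ℝ)]
noncomputable def ksw33 : Fin 3 → ℝ := ![(1 : ℝ), (-1 : ℝ), ((-1 : ℝ) * Real.sqrt 2)]
noncomputable def ksw34 : Fin 3 → ℝ := ![(1 : ℝ), (-1 : ℝ), ((1 : ℝ) * Real.sqrt 2)]
noncomputable def ksw35 : Fin 3 → ℝ := ![(1 : ℝ), ((-1 : ℝ) * Real.sqrt 2), (-1 : ℝ)]
noncomputable def ksw37 : Fin 3 → ℝ := ![(1 : ℝ), ((-1 : ℝ) * Real.sqrt 2), (0 : ℝ)]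
noncomputable def ksw39 : Fin 3 → ℝ := ![(1 : ℝ), ((-1 : ℝ) * Real.sqrt 2), (1 : ℝ)]
noncomputable def ksw40 : Fin 3 → ℝ := ![(1 : ℝ), (0 : ℝ), ((-1 : ℝ) * Real.sqrt 2)]
noncomputable def ksw41 : Fin 3 → ℝ := ![(1 : ℝ), (0 : ℝ), ((1 : ℝ) * Real.sqrt 2)]
noncomputable def ksw42 : Fin 3 → ℝ := ![(1 : ℝ), ((1 : ℝ) * Real.sqrt 2), (-1 : ℝ)]
noncomputable def ksw44 : Fin 3 → ℝ := ![(1 : ℝ), ((1 : ℝ) * Real.sqrt 2), (0 : ℝ)]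
noncomputable def ksw46 : Fin 3 → ℝ := ![(1 : ℝ), ((1 : ℝ) * Real.sqrt 2), (1 : ℝ)]
noncomputable def ksw47 : Fin 3 → ℝ := ![(1 : ℝ), (1 : ℝ), ((-1 : ℝ) * Real.sqrt 2)]
noncomputable def ksw48 : Fin 3 → ℝ := ![(1 : ℝ), (1 : ℝ), ((1 : ℝ) * Real.sqrt 2)]
noncomputable def ksw49 : Fin 3 → ℝ := ![(3 : ℝ), (1 : ℝ), ((1 : ℝ) * Real.sqrt 2)]
noncomputable def ksw50 : Fin 3 → ℝ := ![(3 : ℝ), (-1 : ℝ), ((-1 : ℝ) * Real.sqrt 2)]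
noncomputable def ksw51 : Fin 3 → ℝ := ![(3 : ℝ), (1 : ℝ), ((-1 : ℝ) * Real.sqrt 2)]
noncomputable def ksw52 : Fin 3 → ℝ := ![(3 : ℝ), (-1 : ℝ), ((1 : ℝ) * Real.sqrt 2)]
noncomputable def ksw53 : Fin 3 → ℝ := ![(3 : ℝ), ((1 : ℝ) * Real.sqrt 2), (1 : ℝ)]
noncomputable def ksw54 : Fin 3 → ℝ := ![(3 : ℝ), ((-1 : ℝ) * Real.sqrt 2), (-1 : ℝ)]
noncomputable def ksw55 : Fin 3 → ℝ := ![(3 : ℝ), ((1 : ℝ) * Real.sqrt 2), (-1 : ℝ)]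
noncomputable def ksw56 : Fin 3 → ℝ := ![(3 : ℝ), ((-1 : ℝ) * Real.sqrt 2), (1 : ℝ)]
noncomputable def ksw57 : Fin 3 → ℝ := ![((1 : ℝ) * Real.sqrt 2), (3 : ℝ), (-1 : ℝ)]
noncomputable def ksw58 : Fin 3 → ℝ := ![((1 : ℝ) * Real.sqrt 2), (-1 : ℝ), (3 : ℝ)]
noncomputable def ksw59 : Fin 3 → ℝ := ![(1 : ℝ), ((1 : ℝ) * Real.sqrt 2), (3 : ℝ)]
noncomputable def ksw60 : Fin 3 → ℝ := ![(1 : ℝ), ((1 : ℝ) * Real.sqrt 2), (-3 : ℝ)]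
noncomputable def ksw61 : Fin 3 → ℝ := ![((1 : ℝ) * Real.sqrt 2), (3 : ℝ), (1 : ℝ)]
noncomputable def ksw62 : Fin 3 → ℝ := ![((1 : ℝ) * Real.sqrt 2), (-1 : ℝ), (-3 : ℝ)]
noncomputable def ksw63 : Fin 3 → ℝ := ![(1 : ℝ), (3 : ℝ), ((1 : ℝ) * Real.sqrt 2)]
noncomputable def ksw64 : Fin 3 → ℝ := ![(1 : ℝ), (-3 : ℝ), ((1 : ℝ) * Real.sqrt 2)]
noncomputable def ksw65 : Fin 3 → ℝ := ![(1 : ℝ), (3 : ℝ), ((-1 : ℝ) * Real.sqrt 2)]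
noncomputable def ksw66 : Fin 3 → ℝ := ![(1 : ℝ), (-3 : ℝ), ((-1 : ℝ) * Real.sqrt 2)]
noncomputable def ksw67 : Fin 3 → ℝ := ![((1 : ℝ) * Real.sqrt 2), (1 : ℝ), (3 : ℝ)]
noncomputable def ksw68 : Fin 3 → ℝ := ![((1 : ℝ) * Real.sqrt 2), (-3 : ℝ), (-1 : ℝ)]
noncomputable def ksw69 : Fin 3 → ℝ := ![(1 : ℝ), ((-1 : ℝ) * Real.sqrt 2), (3 : ℝ)]
noncomputable def ksw70 : Fin 3 → ℝ := ![(1 : ℝ), ((-1 : ℝ) * Real.sqrt 2), (-3 : ℝ)]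
noncomputable def ksw71 : Fin 3 → ℝ := ![((1 : ℝ) * Real.sqrt 2), (1 : ℝ), (-3 : ℝ)]
noncomputable def ksw72 : Fin 3 → ℝ := ![((1 : ℝ) * Real.sqrt 2), (-3 : ℝ), (1 : ℝ)]

private lemma ksd0 : ksw0 0 * ksw0 0 + ksw0 1 * ksw0 1 + ksw0 2 * ksw0 2 = (1 : ℝ) := by
  simp only [ksw0, Matrix.cons_val_zero, Matrix.cons_val_one, Matrix.head_cons, Matrix.cons_val_two, Matrix.tail_cons]
  linear_combination (0 : ℝ) * ks_s2
private lemma ksd1 : ksw1 0 * ksw1 0 + ksw1 1 * ksw1 1 + ksw1 2 * ksw1 2 = (3 : ℝ) := by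
  simp only [ksw1, Matrix.cons_val_zero, Matrix.cons_val_one, Matrix.head_cons, Matrix.cons_val_two, Matrix.tail_cons]
  linear_combination (1 : ℝ) * ks_s2
private lemma ksd2 : ksw2 0 * ksw2 0 + ksw2 1 * ksw2 1 + ksw2 2 * ksw2 2 = (2 : ℝ) := by
  simp only [ksw2, Matrix.cons_val_zero, Matrix.cons_val_one, Matrix.head_cons, Matrix.cons_val_two, Matrix.tail_cons]
  linear_combination (0 : ℝ) * ks_s2
private lemma ksd3 : ksw3 0 * ksw3 0 + ksw3 1 * ksw3 1 + ksw3 2 * ksw3 2 = (1 : ℝ) := by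
  simp only [ksw3, Matrix.cons_val_zero, Matrix.cons_val_one, Matrix.head_cons, Matrix.cons_val_two, Matrix.tail_cons]
  linear_combination (0 : ℝ) * ks_s2
private lemma ksd4 : ksw4 0 * ksw4 0 + ksw4 1 * ksw4 1 + ksw4 2 * ksw4 2 = (2 : ℝ) := by
  simp only [ksw4, Matrix.cons_val_zero, Matrix.cons_val_one, Matrix.head_cons, Matrix.cons_val_two, Matrix.tail_cons]
  linear_combination (0 : ℝ) * ks_s2
private lemma ksd5 : ksw5 0 * ksw5 0 + ksw5 1 * ksw5 1 + ksw5 2 * ksw5 2 = (3 : ℝ) := by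
  simp only [ksw5, Matrix.cons_val_zero, Matrix.cons_val_one, Matrix.head_cons, Matrix.cons_val_two, Matrix.tail_cons]
  linear_combination (1 : ℝ) * ks_s2
private lemma ksd6 : ksw6 0 * ksw6 0 + ksw6 1 * ksw6 1 + ksw6 2 * ksw6 2 = (3 : ℝ) := by
  simp only [ksw6, Matrix.cons_val_zero, Matrix.cons_val_one, Matrix.head_cons, Matrix.cons_val_two, Matrix.tail_cons]
  linear_combination (1 : ℝ) * ks_s2
private lemma ksd7 : ksw7 0 * ksw7 0 + ksw7 1 * ksw7 1 + ksw7 2 * ksw7 2 = (3 : ℝ) := by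
  simp only [ksw7, Matrix.cons_val_zero, Matrix.cons_val_one, Matrix.head_cons, Matrix.cons_val_two, Matrix.tail_cons]
  linear_combination (1 : ℝ) * ks_s2
private lemma ksd8 : ksw8 0 * ksw8 0 + ksw8 1 * ksw8 1 + ksw8 2 * ksw8 2 = (4 : ℝ) := by
  simp only [ksw8, Matrix.cons_val_zero, Matrix.cons_val_one, Matrix.head_cons, Matrix.cons_val_two, Matrix.tail_cons]
  linear_combination (1 : ℝ) * ks_s2
private lemma ksd10 : ksw10 0 * ksw10 0 + ksw10 1 * ksw10 1 + ksw10 2 * ksw10 2 = (3 : ℝ) := by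
  simp only [ksw10, Matrix.cons_val_zero, Matrix.cons_val_one, Matrix.head_cons, Matrix.cons_val_two, Matrix.tail_cons]
  linear_combination (1 : ℝ) * ks_s2
private lemma ksd12 : ksw12 0 * ksw12 0 + ksw12 1 * ksw12 1 + ksw12 2 * ksw12 2 = (4 : ℝ) := by
  simp only [ksw12, Matrix.cons_val_zero, Matrix.cons_val_one, Matrix.head_cons, Matrix.cons_val_two, Matrix.tail_cons]
  linear_combination (1 : ℝ) * ks_s2
private lemma ksd15 : ksw15 0 * ksw15 0 + ksw15 1 * ksw15 1 + ksw15 2 * ksw15 2 = (2 : ℝ) := by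
  simp only [ksw15, Matrix.cons_val_zero, Matrix.cons_val_one, Matrix.head_cons, Matrix.cons_val_two, Matrix.tail_cons]
  linear_combination (0 : ℝ) * ks_s2
private lemma ksd18 : ksw18 0 * ksw18 0 + ksw18 1 * ksw18 1 + ksw18 2 * ksw18 2 = (3 : ℝ) := by
  simp only [ksw18, Matrix.cons_val_zero, Matrix.cons_val_one, Matrix.head_cons, Matrix.cons_val_two, Matrix.tail_cons]
  linear_combination (1 : ℝ) * ks_s2
private lemma ksd19 : ksw19 0 * ksw19 0 + ksw19 1 * ksw19 1 + ksw19 2 * ksw19 2 = (2 : ℝ) := by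
  simp only [ksw19, Matrix.cons_val_zero, Matrix.cons_val_one, Matrix.head_cons, Matrix.cons_val_two, Matrix.tail_cons]
  linear_combination (0 : ℝ) * ks_s2
private lemma ksd20 : ksw20 0 * ksw20 0 + ksw20 1 * ksw20 1 + ksw20 2 * ksw20 2 = (1 : ℝ) := by
  simp only [ksw20, Matrix.cons_val_zero, Matrix.cons_val_one, Matrix.head_cons, Matrix.cons_val_two, Matrix.tail_cons]
  linear_combination (0 : ℝ) * ks_s2
private lemma ksd21 : ksw21 0 * ksw21 0 + ksw21 1 * ksw21 1 + ksw21 2 * ksw21 2 = (2 : ℝ) := by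
  simp only [ksw21, Matrix.cons_val_zero, Matrix.cons_val_one, Matrix.head_cons, Matrix.cons_val_two, Matrix.tail_cons]
  linear_combination (0 : ℝ) * ks_s2
private lemma ksd22 : ksw22 0 * ksw22 0 + ksw22 1 * ksw22 1 + ksw22 2 * ksw22 2 = (3 : ℝ) := by
  simp only [ksw22, Matrix.cons_val_zero, Matrix.cons_val_one, Matrix.head_cons, Matrix.cons_val_two, Matrix.tail_cons]
  linear_combination (1 : ℝ) * ks_s2
private lemma ksd25 : ksw25 0 * ksw25 0 + ksw25 1 * ksw25 1 + ksw25 2 * ksw25 2 = (2 : ℝ) := by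
  simp only [ksw25, Matrix.cons_val_zero, Matrix.cons_val_one, Matrix.head_cons, Matrix.cons_val_two, Matrix.tail_cons]
  linear_combination (0 : ℝ) * ks_s2
private lemma ksd28 : ksw28 0 * ksw28 0 + ksw28 1 * ksw28 1 + ksw28 2 * ksw28 2 = (4 : ℝ) := by
  simp only [ksw28, Matrix.cons_val_zero, Matrix.cons_val_one, Matrix.head_cons, Matrix.cons_val_two, Matrix.tail_cons]
  linear_combination (1 : ℝ) * ks_s2
private lemma ksd30 : ksw30 0 * ksw30 0 + ksw30 1 * ksw30 1 + ksw30 2 * ksw30 2 = (3 : ℝ) := by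
  simp only [ksw30, Matrix.cons_val_zero, Matrix.cons_val_one, Matrix.head_cons, Matrix.cons_val_two, Matrix.tail_cons]
  linear_combination (1 : ℝ) * ks_s2
private lemma ksd32 : ksw32 0 * ksw32 0 + ksw32 1 * ksw32 1 + ksw32 2 * ksw32 2 = (4 : ℝ) := by
  simp only [ksw32, Matrix.cons_val_zero, Matrix.cons_val_one, Matrix.head_cons, Matrix.cons_val_two, Matrix.tail_cons]
  linear_combination (1 : ℝ) * ks_s2
private lemma ksd33 : ksw33 0 * ksw33 0 + ksw33 1 * ksw33 1 + ksw33 2 * ksw33 2 = (4 : ℝ) := by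
  simp only [ksw33, Matrix.cons_val_zero, Matrix.cons_val_one, Matrix.head_cons, Matrix.cons_val_two, Matrix.tail_cons]
  linear_combination (1 : ℝ) * ks_s2
private lemma ksd34 : ksw34 0 * ksw34 0 + ksw34 1 * ksw34 1 + ksw34 2 * ksw34 2 = (4 : ℝ) := by
  simp only [ksw34, Matrix.cons_val_zero, Matrix.cons_val_one, Matrix.head_cons, Matrix.cons_val_two, Matrix.tail_cons]
  linear_combination (1 : ℝ) * ks_s2
private lemma ksd35 : ksw35 0 * ksw35 0 + ksw35 1 * ksw35 1 + ksw35 2 * ksw35 2 = (4 : ℝ) := by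
  simp only [ksw35, Matrix.cons_val_zero, Matrix.cons_val_one, Matrix.head_cons, Matrix.cons_val_two, Matrix.tail_cons]
  linear_combination (1 : ℝ) * ks_s2
private lemma ksd37 : ksw37 0 * ksw37 0 + ksw37 1 * ksw37 1 + ksw37 2 * ksw37 2 = (3 : ℝ) := by
  simp only [ksw37, Matrix.cons_val_zero, Matrix.cons_val_one, Matrix.head_cons, Matrix.cons_val_two, Matrix.tail_cons]
  linear_combination (1 : ℝ) * ks_s2
private lemma ksd39 : ksw39 0 * ksw39 0 + ksw39 1 * ksw39 1 + ksw39 2 * ksw39 2 = (4 : ℝ) := by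
  simp only [ksw39, Matrix.cons_val_zero, Matrix.cons_val_one, Matrix.head_cons, Matrix.cons_val_two, Matrix.tail_cons]
  linear_combination (1 : ℝ) * ks_s2
private lemma ksd40 : ksw40 0 * ksw40 0 + ksw40 1 * ksw40 1 + ksw40 2 * ksw40 2 = (3 : ℝ) := by
  simp only [ksw40, Matrix.cons_val_zero, Matrix.cons_val_one, Matrix.head_cons, Matrix.cons_val_two, Matrix.tail_cons]
  linear_combination (1 : ℝ) * ks_s2
private lemma ksd41 : ksw41 0 * ksw41 0 + ksw41 1 * ksw41 1 + ksw41 2 * ksw41 2 = (3 : ℝ) := by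
  simp only [ksw41, Matrix.cons_val_zero, Matrix.cons_val_one, Matrix.head_cons, Matrix.cons_val_two, Matrix.tail_cons]
  linear_combination (1 : ℝ) * ks_s2
private lemma ksd42 : ksw42 0 * ksw42 0 + ksw42 1 * ksw42 1 + ksw42 2 * ksw42 2 = (4 : ℝ) := by
  simp only [ksw42, Matrix.cons_val_zero, Matrix.cons_val_one, Matrix.head_cons, Matrix.cons_val_two, Matrix.tail_cons]
  linear_combination (1 : ℝ) * ks_s2
private lemma ksd44 : ksw44 0 * ksw44 0 + ksw44 1 * ksw44 1 + ksw44 2 * ksw44 2 = (3 : ℝ) := by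
  simp only [ksw44, Matrix.cons_val_zero, Matrix.cons_val_one, Matrix.head_cons, Matrix.cons_val_two, Matrix.tail_cons]
  linear_combination (1 : ℝ) * ks_s2
private lemma ksd46 : ksw46 0 * ksw46 0 + ksw46 1 * ksw46 1 + ksw46 2 * ksw46 2 = (4 : ℝ) := by
  simp only [ksw46, Matrix.cons_val_zero, Matrix.cons_val_one, Matrix.head_cons, Matrix.cons_val_two, Matrix.tail_cons]
  linear_combination (1 : ℝ) * ks_s2
private lemma ksd47 : ksw47 0 * ksw47 0 + ksw47 1 * ksw47 1 + ksw47 2 * ksw47 2 = (4 : ℝ) := by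
  simp only [ksw47, Matrix.cons_val_zero, Matrix.cons_val_one, Matrix.head_cons, Matrix.cons_val_two, Matrix.tail_cons]
  linear_combination (1 : ℝ) * ks_s2
private lemma ksd48 : ksw48 0 * ksw48 0 + ksw48 1 * ksw48 1 + ksw48 2 * ksw48 2 = (4 : ℝ) := by
  simp only [ksw48, Matrix.cons_val_zero, Matrix.cons_val_one, Matrix.head_cons, Matrix.cons_val_two, Matrix.tail_cons]
  linear_combination (1 : ℝ) * ks_s2
private lemma ksd49 : ksw49 0 * ksw49 0 + ksw49 1 * ksw49 1 + ksw49 2 * ksw49 2 = (12 : ℝ) := by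
  simp only [ksw49, Matrix.cons_val_zero, Matrix.cons_val_one, Matrix.head_cons, Matrix.cons_val_two, Matrix.tail_cons]
  linear_combination (1 : ℝ) * ks_s2
private lemma ksd50 : ksw50 0 * ksw50 0 + ksw50 1 * ksw50 1 + ksw50 2 * ksw50 2 = (12 : ℝ) := by
  simp only [ksw50, Matrix.cons_val_zero, Matrix.cons_val_one, Matrix.head_cons, Matrix.cons_val_two, Matrix.tail_cons]
  linear_combination (1 : ℝ) * ks_s2
private lemma ksd51 : ksw51 0 * ksw51 0 + ksw51 1 * ksw51 1 + ksw51 2 * ksw51 2 = (12 : ℝ) := by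
  simp only [ksw51, Matrix.cons_val_zero, Matrix.cons_val_one, Matrix.head_cons, Matrix.cons_val_two, Matrix.tail_cons]
  linear_combination (1 : ℝ) * ks_s2
private lemma ksd52 : ksw52 0 * ksw52 0 + ksw52 1 * ksw52 1 + ksw52 2 * ksw52 2 = (12 : ℝ) := by
  simp only [ksw52, Matrix.cons_val_zero, Matrix.cons_val_one, Matrix.head_cons, Matrix.cons_val_two, Matrix.tail_cons]
  linear_combination (1 : ℝ) * ks_s2
private lemma ksd53 : ksw53 0 * ksw53 0 + ksw53 1 * ksw53 1 + ksw53 2 * ksw53 2 = (12 : ℝ) := by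
  simp only [ksw53, Matrix.cons_val_zero, Matrix.cons_val_one, Matrix.head_cons, Matrix.cons_val_two, Matrix.tail_cons]
  linear_combination (1 : ℝ) * ks_s2
private lemma ksd54 : ksw54 0 * ksw54 0 + ksw54 1 * ksw54 1 + ksw54 2 * ksw54 2 = (12 : ℝ) := by
  simp only [ksw54, Matrix.cons_val_zero, Matrix.cons_val_one, Matrix.head_cons, Matrix.cons_val_two, Matrix.tail_cons]
  linear_combination (1 : ℝ) * ks_s2
private lemma ksd55 : ksw55 0 * ksw55 0 + ksw55 1 * ksw55 1 + ksw55 2 * ksw55 2 = (12 : ℝ) := by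
  simp only [ksw55, Matrix.cons_val_zero, Matrix.cons_val_one, Matrix.head_cons, Matrix.cons_val_two, Matrix.tail_cons]
  linear_combination (1 : ℝ) * ks_s2
private lemma ksd56 : ksw56 0 * ksw56 0 + ksw56 1 * ksw56 1 + ksw56 2 * ksw56 2 = (12 : ℝ) := by
  simp only [ksw56, Matrix.cons_val_zero, Matrix.cons_val_one, Matrix.head_cons, Matrix.cons_val_two, Matrix.tail_cons]
  linear_combination (1 : ℝ) * ks_s2
private lemma ksd57 : ksw57 0 * ksw57 0 + ksw57 1 * ksw57 1 + ksw57 2 * ksw57 2 = (12 : ℝ) := by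
  simp only [ksw57, Matrix.cons_val_zero, Matrix.cons_val_one, Matrix.head_cons, Matrix.cons_val_two, Matrix.tail_cons]
  linear_combination (1 : ℝ) * ks_s2
private lemma ksd58 : ksw58 0 * ksw58 0 + ksw58 1 * ksw58 1 + ksw58 2 * ksw58 2 = (12 : ℝ) := by
  simp only [ksw58, Matrix.cons_val_zero, Matrix.cons_val_one, Matrix.head_cons, Matrix.cons_val_two, Matrix.tail_cons]
  linear_combination (1 : ℝ) * ks_s2
private lemma ksd59 : ksw59 0 * ksw59 0 + ksw59 1 * ksw59 1 + ksw59 2 * ksw59 2 = (12 : ℝ) := by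
  simp only [ksw59, Matrix.cons_val_zero, Matrix.cons_val_one, Matrix.head_cons, Matrix.cons_val_two, Matrix.tail_cons]
  linear_combination (1 : ℝ) * ks_s2
private lemma ksd60 : ksw60 0 * ksw60 0 + ksw60 1 * ksw60 1 + ksw60 2 * ksw60 2 = (12 : ℝ) := by
  simp only [ksw60, Matrix.cons_val_zero, Matrix.cons_val_one, Matrix.head_cons, Matrix.cons_val_two, Matrix.tail_cons]
  linear_combination (1 : ℝ) * ks_s2
private lemma ksd61 : ksw61 0 * ksw61 0 + ksw61 1 * ksw61 1 + ksw61 2 * ksw61 2 = (12 : ℝ) := by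
  simp only [ksw61, Matrix.cons_val_zero, Matrix.cons_val_one, Matrix.head_cons, Matrix.cons_val_two, Matrix.tail_cons]
  linear_combination (1 : ℝ) * ks_s2
private lemma ksd62 : ksw62 0 * ksw62 0 + ksw62 1 * ksw62 1 + ksw62 2 * ksw62 2 = (12 : ℝ) := by
  simp only [ksw62, Matrix.cons_val_zero, Matrix.cons_val_one, Matrix.head_cons, Matrix.cons_val_two, Matrix.tail_cons]
  linear_combination (1 : ℝ) * ks_s2
private lemma ksd63 : ksw63 0 * ksw63 0 + ksw63 1 * ksw63 1 + ksw63 2 * ksw63 2 = (12 : ℝ) := by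
  simp only [ksw63, Matrix.cons_val_zero, Matrix.cons_val_one, Matrix.head_cons, Matrix.cons_val_two, Matrix.tail_cons]
  linear_combination (1 : ℝ) * ks_s2
private lemma ksd64 : ksw64 0 * ksw64 0 + ksw64 1 * ksw64 1 + ksw64 2 * ksw64 2 = (12 : ℝ) := by
  simp only [ksw64, Matrix.cons_val_zero, Matrix.cons_val_one, Matrix.head_cons, Matrix.cons_val_two, Matrix.tail_cons]
  linear_combination (1 : ℝ) * ks_s2
private lemma ksd65 : ksw65 0 * ksw65 0 + ksw65 1 * ksw65 1 + ksw65 2 * ksw65 2 = (12 : ℝ) := by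
  simp only [ksw65, Matrix.cons_val_zero, Matrix.cons_val_one, Matrix.head_cons, Matrix.cons_val_two, Matrix.tail_cons]
  linear_combination (1 : ℝ) * ks_s2
private lemma ksd66 : ksw66 0 * ksw66 0 + ksw66 1 * ksw66 1 + ksw66 2 * ksw66 2 = (12 : ℝ) := by
  simp only [ksw66, Matrix.cons_val_zero, Matrix.cons_val_one, Matrix.head_cons, Matrix.cons_val_two, Matrix.tail_cons]
  linear_combination (1 : ℝ) * ks_s2
private lemma ksd67 : ksw67 0 * ksw67 0 + ksw67 1 * ksw67 1 + ksw67 2 * ksw67 2 = (12 : ℝ) := by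
  simp only [ksw67, Matrix.cons_val_zero, Matrix.cons_val_one, Matrix.head_cons, Matrix.cons_val_two, Matrix.tail_cons]
  linear_combination (1 : ℝ) * ks_s2
private lemma ksd68 : ksw68 0 * ksw68 0 + ksw68 1 * ksw68 1 + ksw68 2 * ksw68 2 = (12 : ℝ) := by
  simp only [ksw68, Matrix.cons_val_zero, Matrix.cons_val_one, Matrix.head_cons, Matrix.cons_val_two, Matrix.tail_cons]
  linear_combination (1 : ℝ) * ks_s2
private lemma ksd69 : ksw69 0 * ksw69 0 + ksw69 1 * ksw69 1 + ksw69 2 * ksw69 2 = (12 : ℝ) := by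
  simp only [ksw69, Matrix.cons_val_zero, Matrix.cons_val_one, Matrix.head_cons, Matrix.cons_val_two, Matrix.tail_cons]
  linear_combination (1 : ℝ) * ks_s2
private lemma ksd70 : ksw70 0 * ksw70 0 + ksw70 1 * ksw70 1 + ksw70 2 * ksw70 2 = (12 : ℝ) := by
  simp only [ksw70, Matrix.cons_val_zero, Matrix.cons_val_one, Matrix.head_cons, Matrix.cons_val_two, Matrix.tail_cons]
  linear_combination (1 : ℝ) * ks_s2
private lemma ksd71 : ksw71 0 * ksw71 0 + ksw71 1 * ksw71 1 + ksw71 2 * ksw71 2 = (12 : ℝ) := by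
  simp only [ksw71, Matrix.cons_val_zero, Matrix.cons_val_one, Matrix.head_cons, Matrix.cons_val_two, Matrix.tail_cons]
  linear_combination (1 : ℝ) * ks_s2
private lemma ksd72 : ksw72 0 * ksw72 0 + ksw72 1 * ksw72 1 + ksw72 2 * ksw72 2 = (12 : ℝ) := by
  simp only [ksw72, Matrix.cons_val_zero, Matrix.cons_val_one, Matrix.head_cons, Matrix.cons_val_two, Matrix.tail_cons]
  linear_combination (1 : ℝ) * ks_s2

private lemma kso_0_3 : ksw0 0 * ksw3 0 + ksw0 1 * ksw3 1 + ksw0 2 * ksw3 2 = 0 := by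
  simp only [ksw0, ksw3, Matrix.cons_val_zero, Matrix.cons_val_one, Matrix.head_cons, Matrix.cons_val_two, Matrix.tail_cons]
  linear_combination (0 : ℝ) * ks_s2
private lemma kso_0_10 : ksw0 0 * ksw10 0 + ksw0 1 * ksw10 1 + ksw0 2 * ksw10 2 = 0 := by
  simp only [ksw0, ksw10, Matrix.cons_val_zero, Matrix.cons_val_one, Matrix.head_cons, Matrix.cons_val_two, Matrix.tail_cons]
  linear_combination (0 : ℝ) * ks_s2
private lemma kso_0_15 : ksw0 0 * ksw15 0 + ksw0 1 * ksw15 1 + ksw0 2 * ksw15 2 = 0 := by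
  simp only [ksw0, ksw15, Matrix.cons_val_zero, Matrix.cons_val_one, Matrix.head_cons, Matrix.cons_val_two, Matrix.tail_cons]
  linear_combination (0 : ℝ) * ks_s2
private lemma kso_0_20 : ksw0 0 * ksw20 0 + ksw0 1 * ksw20 1 + ksw0 2 * ksw20 2 = 0 := by
  simp only [ksw0, ksw20, Matrix.cons_val_zero, Matrix.cons_val_one, Matrix.head_cons, Matrix.cons_val_two, Matrix.tail_cons]
  linear_combination (0 : ℝ) * ks_s2
private lemma kso_0_25 : ksw0 0 * ksw25 0 + ksw0 1 * ksw25 1 + ksw0 2 * ksw25 2 = 0 := by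
  simp only [ksw0, ksw25, Matrix.cons_val_zero, Matrix.cons_val_one, Matrix.head_cons, Matrix.cons_val_two, Matrix.tail_cons]
  linear_combination (0 : ℝ) * ks_s2
private lemma kso_0_30 : ksw0 0 * ksw30 0 + ksw0 1 * ksw30 1 + ksw0 2 * ksw30 2 = 0 := by
  simp only [ksw0, ksw30, Matrix.cons_val_zero, Matrix.cons_val_one, Matrix.head_cons, Matrix.cons_val_two, Matrix.tail_cons]
  linear_combination (0 : ℝ) * ks_s2
private lemma kso_0_37 : ksw0 0 * ksw37 0 + ksw0 1 * ksw37 1 + ksw0 2 * ksw37 2 = 0 := by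
  simp only [ksw0, ksw37, Matrix.cons_val_zero, Matrix.cons_val_one, Matrix.head_cons, Matrix.cons_val_two, Matrix.tail_cons]
  linear_combination (0 : ℝ) * ks_s2
private lemma kso_0_44 : ksw0 0 * ksw44 0 + ksw0 1 * ksw44 1 + ksw0 2 * ksw44 2 = 0 := by
  simp only [ksw0, ksw44, Matrix.cons_val_zero, Matrix.cons_val_one, Matrix.head_cons, Matrix.cons_val_two, Matrix.tail_cons]
  linear_combination (0 : ℝ) * ks_s2
private lemma kso_1_7 : ksw1 0 * ksw7 0 + ksw1 1 * ksw7 1 + ksw1 2 * ksw7 2 = 0 := by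
  simp only [ksw1, ksw7, Matrix.cons_val_zero, Matrix.cons_val_one, Matrix.head_cons, Matrix.cons_val_two, Matrix.tail_cons]
  linear_combination (0 : ℝ) * ks_s2
private lemma kso_1_20 : ksw1 0 * ksw20 0 + ksw1 1 * ksw20 1 + ksw1 2 * ksw20 2 = 0 := by
  simp only [ksw1, ksw20, Matrix.cons_val_zero, Matrix.cons_val_one, Matrix.head_cons, Matrix.cons_val_two, Matrix.tail_cons]
  linear_combination (0 : ℝ) * ks_s2
private lemma kso_1_33 : ksw1 0 * ksw33 0 + ksw1 1 * ksw33 1 + ksw1 2 * ksw33 2 = 0 := by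
  simp only [ksw1, ksw33, Matrix.cons_val_zero, Matrix.cons_val_one, Matrix.head_cons, Matrix.cons_val_two, Matrix.tail_cons]
  linear_combination (0 : ℝ) * ks_s2
private lemma kso_1_48 : ksw1 0 * ksw48 0 + ksw1 1 * ksw48 1 + ksw1 2 * ksw48 2 = 0 := by
  simp only [ksw1, ksw48, Matrix.cons_val_zero, Matrix.cons_val_one, Matrix.head_cons, Matrix.cons_val_two, Matrix.tail_cons]
  linear_combination (0 : ℝ) * ks_s2
private lemma kso_1_49 : ksw1 0 * ksw49 0 + ksw1 1 * ksw49 1 + ksw1 2 * ksw49 2 = 0 := by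
  simp only [ksw1, ksw49, Matrix.cons_val_zero, Matrix.cons_val_one, Matrix.head_cons, Matrix.cons_val_two, Matrix.tail_cons]
  linear_combination (0 : ℝ) * ks_s2
private lemma kso_1_50 : ksw1 0 * ksw50 0 + ksw1 1 * ksw50 1 + ksw1 2 * ksw50 2 = 0 := by
  simp only [ksw1, ksw50, Matrix.cons_val_zero, Matrix.cons_val_one, Matrix.head_cons, Matrix.cons_val_two, Matrix.tail_cons]
  linear_combination (0 : ℝ) * ks_s2
private lemma kso_2_4 : ksw2 0 * ksw4 0 + ksw2 1 * ksw4 1 + ksw2 2 * ksw4 2 = 0 := by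
  simp only [ksw2, ksw4, Matrix.cons_val_zero, Matrix.cons_val_one, Matrix.head_cons, Matrix.cons_val_two, Matrix.tail_cons]
  linear_combination (0 : ℝ) * ks_s2
private lemma kso_2_8 : ksw2 0 * ksw8 0 + ksw2 1 * ksw8 1 + ksw2 2 * ksw8 2 = 0 := by
  simp only [ksw2, ksw8, Matrix.cons_val_zero, Matrix.cons_val_one, Matrix.head_cons, Matrix.cons_val_two, Matrix.tail_cons]
  linear_combination (0 : ℝ) * ks_s2
private lemma kso_2_20 : ksw2 0 * ksw20 0 + ksw2 1 * ksw20 1 + ksw2 2 * ksw20 2 = 0 := by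
  simp only [ksw2, ksw20, Matrix.cons_val_zero, Matrix.cons_val_one, Matrix.head_cons, Matrix.cons_val_two, Matrix.tail_cons]
  linear_combination (0 : ℝ) * ks_s2
private lemma kso_2_32 : ksw2 0 * ksw32 0 + ksw2 1 * ksw32 1 + ksw2 2 * ksw32 2 = 0 := by
  simp only [ksw2, ksw32, Matrix.cons_val_zero, Matrix.cons_val_one, Matrix.head_cons, Matrix.cons_val_two, Matrix.tail_cons]
  linear_combination (0 : ℝ) * ks_s2
private lemma kso_3_18 : ksw3 0 * ksw18 0 + ksw3 1 * ksw18 1 + ksw3 2 * ksw18 2 = 0 := by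
  simp only [ksw3, ksw18, Matrix.cons_val_zero, Matrix.cons_val_one, Matrix.head_cons, Matrix.cons_val_two, Matrix.tail_cons]
  linear_combination (0 : ℝ) * ks_s2
private lemma kso_3_19 : ksw3 0 * ksw19 0 + ksw3 1 * ksw19 1 + ksw3 2 * ksw19 2 = 0 := by
  simp only [ksw3, ksw19, Matrix.cons_val_zero, Matrix.cons_val_one, Matrix.head_cons, Matrix.cons_val_two, Matrix.tail_cons]
  linear_combination (0 : ℝ) * ks_s2
private lemma kso_3_20 : ksw3 0 * ksw20 0 + ksw3 1 * ksw20 1 + ksw3 2 * ksw20 2 = 0 := by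
  simp only [ksw3, ksw20, Matrix.cons_val_zero, Matrix.cons_val_one, Matrix.head_cons, Matrix.cons_val_two, Matrix.tail_cons]
  linear_combination (0 : ℝ) * ks_s2
private lemma kso_3_21 : ksw3 0 * ksw21 0 + ksw3 1 * ksw21 1 + ksw3 2 * ksw21 2 = 0 := by
  simp only [ksw3, ksw21, Matrix.cons_val_zero, Matrix.cons_val_one, Matrix.head_cons, Matrix.cons_val_two, Matrix.tail_cons]
  linear_combination (0 : ℝ) * ks_s2
private lemma kso_3_22 : ksw3 0 * ksw22 0 + ksw3 1 * ksw22 1 + ksw3 2 * ksw22 2 = 0 := by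
  simp only [ksw3, ksw22, Matrix.cons_val_zero, Matrix.cons_val_one, Matrix.head_cons, Matrix.cons_val_two, Matrix.tail_cons]
  linear_combination (0 : ℝ) * ks_s2
private lemma kso_3_40 : ksw3 0 * ksw40 0 + ksw3 1 * ksw40 1 + ksw3 2 * ksw40 2 = 0 := by
  simp only [ksw3, ksw40, Matrix.cons_val_zero, Matrix.cons_val_one, Matrix.head_cons, Matrix.cons_val_two, Matrix.tail_cons]
  linear_combination (0 : ℝ) * ks_s2
private lemma kso_3_41 : ksw3 0 * ksw41 0 + ksw3 1 * ksw41 1 + ksw3 2 * ksw41 2 = 0 := by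
  simp only [ksw3, ksw41, Matrix.cons_val_zero, Matrix.cons_val_one, Matrix.head_cons, Matrix.cons_val_two, Matrix.tail_cons]
  linear_combination (0 : ℝ) * ks_s2
private lemma kso_4_12 : ksw4 0 * ksw12 0 + ksw4 1 * ksw12 1 + ksw4 2 * ksw12 2 = 0 := by
  simp only [ksw4, ksw12, Matrix.cons_val_zero, Matrix.cons_val_one, Matrix.head_cons, Matrix.cons_val_two, Matrix.tail_cons]
  linear_combination (0 : ℝ) * ks_s2
private lemma kso_4_20 : ksw4 0 * ksw20 0 + ksw4 1 * ksw20 1 + ksw4 2 * ksw20 2 = 0 := by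
  simp only [ksw4, ksw20, Matrix.cons_val_zero, Matrix.cons_val_one, Matrix.head_cons, Matrix.cons_val_two, Matrix.tail_cons]
  linear_combination (0 : ℝ) * ks_s2
private lemma kso_4_28 : ksw4 0 * ksw28 0 + ksw4 1 * ksw28 1 + ksw4 2 * ksw28 2 = 0 := by
  simp only [ksw4, ksw28, Matrix.cons_val_zero, Matrix.cons_val_one, Matrix.head_cons, Matrix.cons_val_two, Matrix.tail_cons]
  linear_combination (0 : ℝ) * ks_s2
private lemma kso_5_6 : ksw5 0 * ksw6 0 + ksw5 1 * ksw6 1 + ksw5 2 * ksw6 2 = 0 := by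
  simp only [ksw5, ksw6, Matrix.cons_val_zero, Matrix.cons_val_one, Matrix.head_cons, Matrix.cons_val_two, Matrix.tail_cons]
  linear_combination (0 : ℝ) * ks_s2
private lemma kso_5_20 : ksw5 0 * ksw20 0 + ksw5 1 * ksw20 1 + ksw5 2 * ksw20 2 = 0 := by
  simp only [ksw5, ksw20, Matrix.cons_val_zero, Matrix.cons_val_one, Matrix.head_cons, Matrix.cons_val_two, Matrix.tail_cons]
  linear_combination (0 : ℝ) * ks_s2
private lemma kso_5_34 : ksw5 0 * ksw34 0 + ksw5 1 * ksw34 1 + ksw5 2 * ksw34 2 = 0 := by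
  simp only [ksw5, ksw34, Matrix.cons_val_zero, Matrix.cons_val_one, Matrix.head_cons, Matrix.cons_val_two, Matrix.tail_cons]
  linear_combination (0 : ℝ) * ks_s2
private lemma kso_5_47 : ksw5 0 * ksw47 0 + ksw5 1 * ksw47 1 + ksw5 2 * ksw47 2 = 0 := by
  simp only [ksw5, ksw47, Matrix.cons_val_zero, Matrix.cons_val_one, Matrix.head_cons, Matrix.cons_val_two, Matrix.tail_cons]
  linear_combination (0 : ℝ) * ks_s2
private lemma kso_5_51 : ksw5 0 * ksw51 0 + ksw5 1 * ksw51 1 + ksw5 2 * ksw51 2 = 0 := by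
  simp only [ksw5, ksw51, Matrix.cons_val_zero, Matrix.cons_val_one, Matrix.head_cons, Matrix.cons_val_two, Matrix.tail_cons]
  linear_combination (0 : ℝ) * ks_s2
private lemma kso_5_52 : ksw5 0 * ksw52 0 + ksw5 1 * ksw52 1 + ksw5 2 * ksw52 2 = 0 := by
  simp only [ksw5, ksw52, Matrix.cons_val_zero, Matrix.cons_val_one, Matrix.head_cons, Matrix.cons_val_two, Matrix.tail_cons]
  linear_combination (0 : ℝ) * ks_s2
private lemma kso_6_20 : ksw6 0 * ksw20 0 + ksw6 1 * ksw20 1 + ksw6 2 * ksw20 2 = 0 := by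
  simp only [ksw6, ksw20, Matrix.cons_val_zero, Matrix.cons_val_one, Matrix.head_cons, Matrix.cons_val_two, Matrix.tail_cons]
  linear_combination (0 : ℝ) * ks_s2
private lemma kso_6_35 : ksw6 0 * ksw35 0 + ksw6 1 * ksw35 1 + ksw6 2 * ksw35 2 = 0 := by
  simp only [ksw6, ksw35, Matrix.cons_val_zero, Matrix.cons_val_one, Matrix.head_cons, Matrix.cons_val_two, Matrix.tail_cons]
  linear_combination (0 : ℝ) * ks_s2
private lemma kso_6_46 : ksw6 0 * ksw46 0 + ksw6 1 * ksw46 1 + ksw6 2 * ksw46 2 = 0 := by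
  simp only [ksw6, ksw46, Matrix.cons_val_zero, Matrix.cons_val_one, Matrix.head_cons, Matrix.cons_val_two, Matrix.tail_cons]
  linear_combination (0 : ℝ) * ks_s2
private lemma kso_6_53 : ksw6 0 * ksw53 0 + ksw6 1 * ksw53 1 + ksw6 2 * ksw53 2 = 0 := by
  simp only [ksw6, ksw53, Matrix.cons_val_zero, Matrix.cons_val_one, Matrix.head_cons, Matrix.cons_val_two, Matrix.tail_cons]
  linear_combination (0 : ℝ) * ks_s2
private lemma kso_6_54 : ksw6 0 * ksw54 0 + ksw6 1 * ksw54 1 + ksw6 2 * ksw54 2 = 0 := by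
  simp only [ksw6, ksw54, Matrix.cons_val_zero, Matrix.cons_val_one, Matrix.head_cons, Matrix.cons_val_two, Matrix.tail_cons]
  linear_combination (0 : ℝ) * ks_s2
private lemma kso_7_20 : ksw7 0 * ksw20 0 + ksw7 1 * ksw20 1 + ksw7 2 * ksw20 2 = 0 := by
  simp only [ksw7, ksw20, Matrix.cons_val_zero, Matrix.cons_val_one, Matrix.head_cons, Matrix.cons_val_two, Matrix.tail_cons]
  linear_combination (0 : ℝ) * ks_s2
private lemma kso_7_39 : ksw7 0 * ksw39 0 + ksw7 1 * ksw39 1 + ksw7 2 * ksw39 2 = 0 := by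
  simp only [ksw7, ksw39, Matrix.cons_val_zero, Matrix.cons_val_one, Matrix.head_cons, Matrix.cons_val_two, Matrix.tail_cons]
  linear_combination (0 : ℝ) * ks_s2
private lemma kso_7_42 : ksw7 0 * ksw42 0 + ksw7 1 * ksw42 1 + ksw7 2 * ksw42 2 = 0 := by
  simp only [ksw7, ksw42, Matrix.cons_val_zero, Matrix.cons_val_one, Matrix.head_cons, Matrix.cons_val_two, Matrix.tail_cons]
  linear_combination (0 : ℝ) * ks_s2
private lemma kso_7_55 : ksw7 0 * ksw55 0 + ksw7 1 * ksw55 1 + ksw7 2 * ksw55 2 = 0 := by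
  simp only [ksw7, ksw55, Matrix.cons_val_zero, Matrix.cons_val_one, Matrix.head_cons, Matrix.cons_val_two, Matrix.tail_cons]
  linear_combination (0 : ℝ) * ks_s2
private lemma kso_7_56 : ksw7 0 * ksw56 0 + ksw7 1 * ksw56 1 + ksw7 2 * ksw56 2 = 0 := by
  simp only [ksw7, ksw56, Matrix.cons_val_zero, Matrix.cons_val_one, Matrix.head_cons, Matrix.cons_val_two, Matrix.tail_cons]
  linear_combination (0 : ℝ) * ks_s2
private lemma kso_8_32 : ksw8 0 * ksw32 0 + ksw8 1 * ksw32 1 + ksw8 2 * ksw32 2 = 0 := by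
  simp only [ksw8, ksw32, Matrix.cons_val_zero, Matrix.cons_val_one, Matrix.head_cons, Matrix.cons_val_two, Matrix.tail_cons]
  linear_combination (1 : ℝ) * ks_s2
private lemma kso_8_41 : ksw8 0 * ksw41 0 + ksw8 1 * ksw41 1 + ksw8 2 * ksw41 2 = 0 := by
  simp only [ksw8, ksw41, Matrix.cons_val_zero, Matrix.cons_val_one, Matrix.head_cons, Matrix.cons_val_two, Matrix.tail_cons]
  linear_combination (0 : ℝ) * ks_s2
private lemma kso_8_44 : ksw8 0 * ksw44 0 + ksw8 1 * ksw44 1 + ksw8 2 * ksw44 2 = 0 := by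
  simp only [ksw8, ksw44, Matrix.cons_val_zero, Matrix.cons_val_one, Matrix.head_cons, Matrix.cons_val_two, Matrix.tail_cons]
  linear_combination (0 : ℝ) * ks_s2
private lemma kso_8_57 : ksw8 0 * ksw57 0 + ksw8 1 * ksw57 1 + ksw8 2 * ksw57 2 = 0 := by
  simp only [ksw8, ksw57, Matrix.cons_val_zero, Matrix.cons_val_one, Matrix.head_cons, Matrix.cons_val_two, Matrix.tail_cons]
  linear_combination (1 : ℝ) * ks_s2
private lemma kso_8_58 : ksw8 0 * ksw58 0 + ksw8 1 * ksw58 1 + ksw8 2 * ksw58 2 = 0 := by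
  simp only [ksw8, ksw58, Matrix.cons_val_zero, Matrix.cons_val_one, Matrix.head_cons, Matrix.cons_val_two, Matrix.tail_cons]
  linear_combination (1 : ℝ) * ks_s2
private lemma kso_10_42 : ksw10 0 * ksw42 0 + ksw10 1 * ksw42 1 + ksw10 2 * ksw42 2 = 0 := by
  simp only [ksw10, ksw42, Matrix.cons_val_zero, Matrix.cons_val_one, Matrix.head_cons, Matrix.cons_val_two, Matrix.tail_cons]
  linear_combination (0 : ℝ) * ks_s2
private lemma kso_10_44 : ksw10 0 * ksw44 0 + ksw10 1 * ksw44 1 + ksw10 2 * ksw44 2 = 0 := by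
  simp only [ksw10, ksw44, Matrix.cons_val_zero, Matrix.cons_val_one, Matrix.head_cons, Matrix.cons_val_two, Matrix.tail_cons]
  linear_combination (0 : ℝ) * ks_s2
private lemma kso_10_46 : ksw10 0 * ksw46 0 + ksw10 1 * ksw46 1 + ksw10 2 * ksw46 2 = 0 := by
  simp only [ksw10, ksw46, Matrix.cons_val_zero, Matrix.cons_val_one, Matrix.head_cons, Matrix.cons_val_two, Matrix.tail_cons]
  linear_combination (0 : ℝ) * ks_s2
private lemma kso_10_59 : ksw10 0 * ksw59 0 + ksw10 1 * ksw59 1 + ksw10 2 * ksw59 2 = 0 := by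
  simp only [ksw10, ksw59, Matrix.cons_val_zero, Matrix.cons_val_one, Matrix.head_cons, Matrix.cons_val_two, Matrix.tail_cons]
  linear_combination (0 : ℝ) * ks_s2
private lemma kso_10_60 : ksw10 0 * ksw60 0 + ksw10 1 * ksw60 1 + ksw10 2 * ksw60 2 = 0 := by
  simp only [ksw10, ksw60, Matrix.cons_val_zero, Matrix.cons_val_one, Matrix.head_cons, Matrix.cons_val_two, Matrix.tail_cons]
  linear_combination (0 : ℝ) * ks_s2
private lemma kso_12_28 : ksw12 0 * ksw28 0 + ksw12 1 * ksw28 1 + ksw12 2 * ksw28 2 = 0 := by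
  simp only [ksw12, ksw28, Matrix.cons_val_zero, Matrix.cons_val_one, Matrix.head_cons, Matrix.cons_val_two, Matrix.tail_cons]
  linear_combination (1 : ℝ) * ks_s2
private lemma kso_12_40 : ksw12 0 * ksw40 0 + ksw12 1 * ksw40 1 + ksw12 2 * ksw40 2 = 0 := by
  simp only [ksw12, ksw40, Matrix.cons_val_zero, Matrix.cons_val_one, Matrix.head_cons, Matrix.cons_val_two, Matrix.tail_cons]
  linear_combination (0 : ℝ) * ks_s2
private lemma kso_12_44 : ksw12 0 * ksw44 0 + ksw12 1 * ksw44 1 + ksw12 2 * ksw44 2 = 0 := by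
  simp only [ksw12, ksw44, Matrix.cons_val_zero, Matrix.cons_val_one, Matrix.head_cons, Matrix.cons_val_two, Matrix.tail_cons]
  linear_combination (0 : ℝ) * ks_s2
private lemma kso_12_61 : ksw12 0 * ksw61 0 + ksw12 1 * ksw61 1 + ksw12 2 * ksw61 2 = 0 := by
  simp only [ksw12, ksw61, Matrix.cons_val_zero, Matrix.cons_val_one, Matrix.head_cons, Matrix.cons_val_two, Matrix.tail_cons]
  linear_combination (1 : ℝ) * ks_s2
private lemma kso_12_62 : ksw12 0 * ksw62 0 + ksw12 1 * ksw62 1 + ksw12 2 * ksw62 2 = 0 := by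
  simp only [ksw12, ksw62, Matrix.cons_val_zero, Matrix.cons_val_one, Matrix.head_cons, Matrix.cons_val_two, Matrix.tail_cons]
  linear_combination (1 : ℝ) * ks_s2
private lemma kso_15_25 : ksw15 0 * ksw25 0 + ksw15 1 * ksw25 1 + ksw15 2 * ksw25 2 = 0 := by
  simp only [ksw15, ksw25, Matrix.cons_val_zero, Matrix.cons_val_one, Matrix.head_cons, Matrix.cons_val_two, Matrix.tail_cons]
  linear_combination (0 : ℝ) * ks_s2
private lemma kso_15_47 : ksw15 0 * ksw47 0 + ksw15 1 * ksw47 1 + ksw15 2 * ksw47 2 = 0 := by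
  simp only [ksw15, ksw47, Matrix.cons_val_zero, Matrix.cons_val_one, Matrix.head_cons, Matrix.cons_val_two, Matrix.tail_cons]
  linear_combination (0 : ℝ) * ks_s2
private lemma kso_15_48 : ksw15 0 * ksw48 0 + ksw15 1 * ksw48 1 + ksw15 2 * ksw48 2 = 0 := by
  simp only [ksw15, ksw48, Matrix.cons_val_zero, Matrix.cons_val_one, Matrix.head_cons, Matrix.cons_val_two, Matrix.tail_cons]
  linear_combination (0 : ℝ) * ks_s2
private lemma kso_18_34 : ksw18 0 * ksw34 0 + ksw18 1 * ksw34 1 + ksw18 2 * ksw34 2 = 0 := by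
  simp only [ksw18, ksw34, Matrix.cons_val_zero, Matrix.cons_val_one, Matrix.head_cons, Matrix.cons_val_two, Matrix.tail_cons]
  linear_combination (0 : ℝ) * ks_s2
private lemma kso_18_41 : ksw18 0 * ksw41 0 + ksw18 1 * ksw41 1 + ksw18 2 * ksw41 2 = 0 := by
  simp only [ksw18, ksw41, Matrix.cons_val_zero, Matrix.cons_val_one, Matrix.head_cons, Matrix.cons_val_two, Matrix.tail_cons]
  linear_combination (0 : ℝ) * ks_s2
private lemma kso_18_48 : ksw18 0 * ksw48 0 + ksw18 1 * ksw48 1 + ksw18 2 * ksw48 2 = 0 := by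
  simp only [ksw18, ksw48, Matrix.cons_val_zero, Matrix.cons_val_one, Matrix.head_cons, Matrix.cons_val_two, Matrix.tail_cons]
  linear_combination (0 : ℝ) * ks_s2
private lemma kso_18_63 : ksw18 0 * ksw63 0 + ksw18 1 * ksw63 1 + ksw18 2 * ksw63 2 = 0 := by
  simp only [ksw18, ksw63, Matrix.cons_val_zero, Matrix.cons_val_one, Matrix.head_cons, Matrix.cons_val_two, Matrix.tail_cons]
  linear_combination (0 : ℝ) * ks_s2
private lemma kso_18_64 : ksw18 0 * ksw64 0 + ksw18 1 * ksw64 1 + ksw18 2 * ksw64 2 = 0 := by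
  simp only [ksw18, ksw64, Matrix.cons_val_zero, Matrix.cons_val_one, Matrix.head_cons, Matrix.cons_val_two, Matrix.tail_cons]
  linear_combination (0 : ℝ) * ks_s2
private lemma kso_19_21 : ksw19 0 * ksw21 0 + ksw19 1 * ksw21 1 + ksw19 2 * ksw21 2 = 0 := by
  simp only [ksw19, ksw21, Matrix.cons_val_zero, Matrix.cons_val_one, Matrix.head_cons, Matrix.cons_val_two, Matrix.tail_cons]
  linear_combination (0 : ℝ) * ks_s2
private lemma kso_19_39 : ksw19 0 * ksw39 0 + ksw19 1 * ksw39 1 + ksw19 2 * ksw39 2 = 0 := by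
  simp only [ksw19, ksw39, Matrix.cons_val_zero, Matrix.cons_val_one, Matrix.head_cons, Matrix.cons_val_two, Matrix.tail_cons]
  linear_combination (0 : ℝ) * ks_s2
private lemma kso_19_46 : ksw19 0 * ksw46 0 + ksw19 1 * ksw46 1 + ksw19 2 * ksw46 2 = 0 := by
  simp only [ksw19, ksw46, Matrix.cons_val_zero, Matrix.cons_val_one, Matrix.head_cons, Matrix.cons_val_two, Matrix.tail_cons]
  linear_combination (0 : ℝ) * ks_s2
private lemma kso_21_35 : ksw21 0 * ksw35 0 + ksw21 1 * ksw35 1 + ksw21 2 * ksw35 2 = 0 := by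
  simp only [ksw21, ksw35, Matrix.cons_val_zero, Matrix.cons_val_one, Matrix.head_cons, Matrix.cons_val_two, Matrix.tail_cons]
  linear_combination (0 : ℝ) * ks_s2
private lemma kso_21_42 : ksw21 0 * ksw42 0 + ksw21 1 * ksw42 1 + ksw21 2 * ksw42 2 = 0 := by
  simp only [ksw21, ksw42, Matrix.cons_val_zero, Matrix.cons_val_one, Matrix.head_cons, Matrix.cons_val_two, Matrix.tail_cons]
  linear_combination (0 : ℝ) * ks_s2
private lemma kso_22_33 : ksw22 0 * ksw33 0 + ksw22 1 * ksw33 1 + ksw22 2 * ksw33 2 = 0 := by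
  simp only [ksw22, ksw33, Matrix.cons_val_zero, Matrix.cons_val_one, Matrix.head_cons, Matrix.cons_val_two, Matrix.tail_cons]
  linear_combination (0 : ℝ) * ks_s2
private lemma kso_22_40 : ksw22 0 * ksw40 0 + ksw22 1 * ksw40 1 + ksw22 2 * ksw40 2 = 0 := by
  simp only [ksw22, ksw40, Matrix.cons_val_zero, Matrix.cons_val_one, Matrix.head_cons, Matrix.cons_val_two, Matrix.tail_cons]
  linear_combination (0 : ℝ) * ks_s2
private lemma kso_22_47 : ksw22 0 * ksw47 0 + ksw22 1 * ksw47 1 + ksw22 2 * ksw47 2 = 0 := by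
  simp only [ksw22, ksw47, Matrix.cons_val_zero, Matrix.cons_val_one, Matrix.head_cons, Matrix.cons_val_two, Matrix.tail_cons]
  linear_combination (0 : ℝ) * ks_s2
private lemma kso_22_65 : ksw22 0 * ksw65 0 + ksw22 1 * ksw65 1 + ksw22 2 * ksw65 2 = 0 := by
  simp only [ksw22, ksw65, Matrix.cons_val_zero, Matrix.cons_val_one, Matrix.head_cons, Matrix.cons_val_two, Matrix.tail_cons]
  linear_combination (0 : ℝ) * ks_s2
private lemma kso_22_66 : ksw22 0 * ksw66 0 + ksw22 1 * ksw66 1 + ksw22 2 * ksw66 2 = 0 := by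
  simp only [ksw22, ksw66, Matrix.cons_val_zero, Matrix.cons_val_one, Matrix.head_cons, Matrix.cons_val_two, Matrix.tail_cons]
  linear_combination (0 : ℝ) * ks_s2
private lemma kso_25_33 : ksw25 0 * ksw33 0 + ksw25 1 * ksw33 1 + ksw25 2 * ksw33 2 = 0 := by
  simp only [ksw25, ksw33, Matrix.cons_val_zero, Matrix.cons_val_one, Matrix.head_cons, Matrix.cons_val_two, Matrix.tail_cons]
  linear_combination (0 : ℝ) * ks_s2
private lemma kso_25_34 : ksw25 0 * ksw34 0 + ksw25 1 * ksw34 1 + ksw25 2 * ksw34 2 = 0 := by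
  simp only [ksw25, ksw34, Matrix.cons_val_zero, Matrix.cons_val_one, Matrix.head_cons, Matrix.cons_val_two, Matrix.tail_cons]
  linear_combination (0 : ℝ) * ks_s2
private lemma kso_28_37 : ksw28 0 * ksw37 0 + ksw28 1 * ksw37 1 + ksw28 2 * ksw37 2 = 0 := by
  simp only [ksw28, ksw37, Matrix.cons_val_zero, Matrix.cons_val_one, Matrix.head_cons, Matrix.cons_val_two, Matrix.tail_cons]
  linear_combination (0 : ℝ) * ks_s2
private lemma kso_28_41 : ksw28 0 * ksw41 0 + ksw28 1 * ksw41 1 + ksw28 2 * ksw41 2 = 0 := by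
  simp only [ksw28, ksw41, Matrix.cons_val_zero, Matrix.cons_val_one, Matrix.head_cons, Matrix.cons_val_two, Matrix.tail_cons]
  linear_combination (0 : ℝ) * ks_s2
private lemma kso_28_67 : ksw28 0 * ksw67 0 + ksw28 1 * ksw67 1 + ksw28 2 * ksw67 2 = 0 := by
  simp only [ksw28, ksw67, Matrix.cons_val_zero, Matrix.cons_val_one, Matrix.head_cons, Matrix.cons_val_two, Matrix.tail_cons]
  linear_combination (1 : ℝ) * ks_s2
private lemma kso_28_68 : ksw28 0 * ksw68 0 + ksw28 1 * ksw68 1 + ksw28 2 * ksw68 2 = 0 := by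
  simp only [ksw28, ksw68, Matrix.cons_val_zero, Matrix.cons_val_one, Matrix.head_cons, Matrix.cons_val_two, Matrix.tail_cons]
  linear_combination (1 : ℝ) * ks_s2
private lemma kso_30_35 : ksw30 0 * ksw35 0 + ksw30 1 * ksw35 1 + ksw30 2 * ksw35 2 = 0 := by
  simp only [ksw30, ksw35, Matrix.cons_val_zero, Matrix.cons_val_one, Matrix.head_cons, Matrix.cons_val_two, Matrix.tail_cons]
  linear_combination (0 : ℝ) * ks_s2
private lemma kso_30_37 : ksw30 0 * ksw37 0 + ksw30 1 * ksw37 1 + ksw30 2 * ksw37 2 = 0 := by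
  simp only [ksw30, ksw37, Matrix.cons_val_zero, Matrix.cons_val_one, Matrix.head_cons, Matrix.cons_val_two, Matrix.tail_cons]
  linear_combination (0 : ℝ) * ks_s2
private lemma kso_30_39 : ksw30 0 * ksw39 0 + ksw30 1 * ksw39 1 + ksw30 2 * ksw39 2 = 0 := by
  simp only [ksw30, ksw39, Matrix.cons_val_zero, Matrix.cons_val_one, Matrix.head_cons, Matrix.cons_val_two, Matrix.tail_cons]
  linear_combination (0 : ℝ) * ks_s2
private lemma kso_30_69 : ksw30 0 * ksw69 0 + ksw30 1 * ksw69 1 + ksw30 2 * ksw69 2 = 0 := by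
  simp only [ksw30, ksw69, Matrix.cons_val_zero, Matrix.cons_val_one, Matrix.head_cons, Matrix.cons_val_two, Matrix.tail_cons]
  linear_combination (0 : ℝ) * ks_s2
private lemma kso_30_70 : ksw30 0 * ksw70 0 + ksw30 1 * ksw70 1 + ksw30 2 * ksw70 2 = 0 := by
  simp only [ksw30, ksw70, Matrix.cons_val_zero, Matrix.cons_val_one, Matrix.head_cons, Matrix.cons_val_two, Matrix.tail_cons]
  linear_combination (0 : ℝ) * ks_s2
private lemma kso_32_37 : ksw32 0 * ksw37 0 + ksw32 1 * ksw37 1 + ksw32 2 * ksw37 2 = 0 := by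
  simp only [ksw32, ksw37, Matrix.cons_val_zero, Matrix.cons_val_one, Matrix.head_cons, Matrix.cons_val_two, Matrix.tail_cons]
  linear_combination (0 : ℝ) * ks_s2
private lemma kso_32_40 : ksw32 0 * ksw40 0 + ksw32 1 * ksw40 1 + ksw32 2 * ksw40 2 = 0 := by
  simp only [ksw32, ksw40, Matrix.cons_val_zero, Matrix.cons_val_one, Matrix.head_cons, Matrix.cons_val_two, Matrix.tail_cons]
  linear_combination (0 : ℝ) * ks_s2
private lemma kso_32_71 : ksw32 0 * ksw71 0 + ksw32 1 * ksw71 1 + ksw32 2 * ksw71 2 = 0 := by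
  simp only [ksw32, ksw71, Matrix.cons_val_zero, Matrix.cons_val_one, Matrix.head_cons, Matrix.cons_val_two, Matrix.tail_cons]
  linear_combination (1 : ℝ) * ks_s2
private lemma kso_32_72 : ksw32 0 * ksw72 0 + ksw32 1 * ksw72 1 + ksw32 2 * ksw72 2 = 0 := by
  simp only [ksw32, ksw72, Matrix.cons_val_zero, Matrix.cons_val_one, Matrix.head_cons, Matrix.cons_val_two, Matrix.tail_cons]
  linear_combination (1 : ℝ) * ks_s2
private lemma kso_33_34 : ksw33 0 * ksw34 0 + ksw33 1 * ksw34 1 + ksw33 2 * ksw34 2 = 0 := by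
  simp only [ksw33, ksw34, Matrix.cons_val_zero, Matrix.cons_val_one, Matrix.head_cons, Matrix.cons_val_two, Matrix.tail_cons]
  linear_combination (-1 : ℝ) * ks_s2
private lemma kso_33_49 : ksw33 0 * ksw49 0 + ksw33 1 * ksw49 1 + ksw33 2 * ksw49 2 = 0 := by
  simp only [ksw33, ksw49, Matrix.cons_val_zero, Matrix.cons_val_one, Matrix.head_cons, Matrix.cons_val_two, Matrix.tail_cons]
  linear_combination (-1 : ℝ) * ks_s2
private lemma kso_33_65 : ksw33 0 * ksw65 0 + ksw33 1 * ksw65 1 + ksw33 2 * ksw65 2 = 0 := by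
  simp only [ksw33, ksw65, Matrix.cons_val_zero, Matrix.cons_val_one, Matrix.head_cons, Matrix.cons_val_two, Matrix.tail_cons]
  linear_combination (1 : ℝ) * ks_s2
private lemma kso_34_51 : ksw34 0 * ksw51 0 + ksw34 1 * ksw51 1 + ksw34 2 * ksw51 2 = 0 := by
  simp only [ksw34, ksw51, Matrix.cons_val_zero, Matrix.cons_val_one, Matrix.head_cons, Matrix.cons_val_two, Matrix.tail_cons]
  linear_combination (-1 : ℝ) * ks_s2
private lemma kso_34_63 : ksw34 0 * ksw63 0 + ksw34 1 * ksw63 1 + ksw34 2 * ksw63 2 = 0 := by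
  simp only [ksw34, ksw63, Matrix.cons_val_zero, Matrix.cons_val_one, Matrix.head_cons, Matrix.cons_val_two, Matrix.tail_cons]
  linear_combination (1 : ℝ) * ks_s2
private lemma kso_35_42 : ksw35 0 * ksw42 0 + ksw35 1 * ksw42 1 + ksw35 2 * ksw42 2 = 0 := by
  simp only [ksw35, ksw42, Matrix.cons_val_zero, Matrix.cons_val_one, Matrix.head_cons, Matrix.cons_val_two, Matrix.tail_cons]
  linear_combination (-1 : ℝ) * ks_s2
private lemma kso_35_53 : ksw35 0 * ksw53 0 + ksw35 1 * ksw53 1 + ksw35 2 * ksw53 2 = 0 := by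
  simp only [ksw35, ksw53, Matrix.cons_val_zero, Matrix.cons_val_one, Matrix.head_cons, Matrix.cons_val_two, Matrix.tail_cons]
  linear_combination (-1 : ℝ) * ks_s2
private lemma kso_35_69 : ksw35 0 * ksw69 0 + ksw35 1 * ksw69 1 + ksw35 2 * ksw69 2 = 0 := by
  simp only [ksw35, ksw69, Matrix.cons_val_zero, Matrix.cons_val_one, Matrix.head_cons, Matrix.cons_val_two, Matrix.tail_cons]
  linear_combination (1 : ℝ) * ks_s2
private lemma kso_37_67 : ksw37 0 * ksw67 0 + ksw37 1 * ksw67 1 + ksw37 2 * ksw67 2 = 0 := by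
  simp only [ksw37, ksw67, Matrix.cons_val_zero, Matrix.cons_val_one, Matrix.head_cons, Matrix.cons_val_two, Matrix.tail_cons]
  linear_combination (0 : ℝ) * ks_s2
private lemma kso_37_71 : ksw37 0 * ksw71 0 + ksw37 1 * ksw71 1 + ksw37 2 * ksw71 2 = 0 := by
  simp only [ksw37, ksw71, Matrix.cons_val_zero, Matrix.cons_val_one, Matrix.head_cons, Matrix.cons_val_two, Matrix.tail_cons]
  linear_combination (0 : ℝ) * ks_s2
private lemma kso_39_46 : ksw39 0 * ksw46 0 + ksw39 1 * ksw46 1 + ksw39 2 * ksw46 2 = 0 := by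
  simp only [ksw39, ksw46, Matrix.cons_val_zero, Matrix.cons_val_one, Matrix.head_cons, Matrix.cons_val_two, Matrix.tail_cons]
  linear_combination (-1 : ℝ) * ks_s2
private lemma kso_39_55 : ksw39 0 * ksw55 0 + ksw39 1 * ksw55 1 + ksw39 2 * ksw55 2 = 0 := by
  simp only [ksw39, ksw55, Matrix.cons_val_zero, Matrix.cons_val_one, Matrix.head_cons, Matrix.cons_val_two, Matrix.tail_cons]
  linear_combination (-1 : ℝ) * ks_s2
private lemma kso_39_70 : ksw39 0 * ksw70 0 + ksw39 1 * ksw70 1 + ksw39 2 * ksw70 2 = 0 := by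
  simp only [ksw39, ksw70, Matrix.cons_val_zero, Matrix.cons_val_one, Matrix.head_cons, Matrix.cons_val_two, Matrix.tail_cons]
  linear_combination (1 : ℝ) * ks_s2
private lemma kso_40_61 : ksw40 0 * ksw61 0 + ksw40 1 * ksw61 1 + ksw40 2 * ksw61 2 = 0 := by
  simp only [ksw40, ksw61, Matrix.cons_val_zero, Matrix.cons_val_one, Matrix.head_cons, Matrix.cons_val_two, Matrix.tail_cons]
  linear_combination (0 : ℝ) * ks_s2
private lemma kso_40_72 : ksw40 0 * ksw72 0 + ksw40 1 * ksw72 1 + ksw40 2 * ksw72 2 = 0 := by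
  simp only [ksw40, ksw72, Matrix.cons_val_zero, Matrix.cons_val_one, Matrix.head_cons, Matrix.cons_val_two, Matrix.tail_cons]
  linear_combination (0 : ℝ) * ks_s2
private lemma kso_41_57 : ksw41 0 * ksw57 0 + ksw41 1 * ksw57 1 + ksw41 2 * ksw57 2 = 0 := by
  simp only [ksw41, ksw57, Matrix.cons_val_zero, Matrix.cons_val_one, Matrix.head_cons, Matrix.cons_val_two, Matrix.tail_cons]
  linear_combination (0 : ℝ) * ks_s2
private lemma kso_41_68 : ksw41 0 * ksw68 0 + ksw41 1 * ksw68 1 + ksw41 2 * ksw68 2 = 0 := by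
  simp only [ksw41, ksw68, Matrix.cons_val_zero, Matrix.cons_val_one, Matrix.head_cons, Matrix.cons_val_two, Matrix.tail_cons]
  linear_combination (0 : ℝ) * ks_s2
private lemma kso_42_56 : ksw42 0 * ksw56 0 + ksw42 1 * ksw56 1 + ksw42 2 * ksw56 2 = 0 := by
  simp only [ksw42, ksw56, Matrix.cons_val_zero, Matrix.cons_val_one, Matrix.head_cons, Matrix.cons_val_two, Matrix.tail_cons]
  linear_combination (-1 : ℝ) * ks_s2
private lemma kso_42_59 : ksw42 0 * ksw59 0 + ksw42 1 * ksw59 1 + ksw42 2 * ksw59 2 = 0 := by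
  simp only [ksw42, ksw59, Matrix.cons_val_zero, Matrix.cons_val_one, Matrix.head_cons, Matrix.cons_val_two, Matrix.tail_cons]
  linear_combination (1 : ℝ) * ks_s2
private lemma kso_44_58 : ksw44 0 * ksw58 0 + ksw44 1 * ksw58 1 + ksw44 2 * ksw58 2 = 0 := by
  simp only [ksw44, ksw58, Matrix.cons_val_zero, Matrix.cons_val_one, Matrix.head_cons, Matrix.cons_val_two, Matrix.tail_cons]
  linear_combination (0 : ℝ) * ks_s2
private lemma kso_44_62 : ksw44 0 * ksw62 0 + ksw44 1 * ksw62 1 + ksw44 2 * ksw62 2 = 0 := by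
  simp only [ksw44, ksw62, Matrix.cons_val_zero, Matrix.cons_val_one, Matrix.head_cons, Matrix.cons_val_two, Matrix.tail_cons]
  linear_combination (0 : ℝ) * ks_s2
private lemma kso_46_54 : ksw46 0 * ksw54 0 + ksw46 1 * ksw54 1 + ksw46 2 * ksw54 2 = 0 := by
  simp only [ksw46, ksw54, Matrix.cons_val_zero, Matrix.cons_val_one, Matrix.head_cons, Matrix.cons_val_two, Matrix.tail_cons]
  linear_combination (-1 : ℝ) * ks_s2
private lemma kso_46_60 : ksw46 0 * ksw60 0 + ksw46 1 * ksw60 1 + ksw46 2 * ksw60 2 = 0 := by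
  simp only [ksw46, ksw60, Matrix.cons_val_zero, Matrix.cons_val_one, Matrix.head_cons, Matrix.cons_val_two, Matrix.tail_cons]
  linear_combination (1 : ℝ) * ks_s2
private lemma kso_47_48 : ksw47 0 * ksw48 0 + ksw47 1 * ksw48 1 + ksw47 2 * ksw48 2 = 0 := by
  simp only [ksw47, ksw48, Matrix.cons_val_zero, Matrix.cons_val_one, Matrix.head_cons, Matrix.cons_val_two, Matrix.tail_cons]
  linear_combination (-1 : ℝ) * ks_s2
private lemma kso_47_52 : ksw47 0 * ksw52 0 + ksw47 1 * ksw52 1 + ksw47 2 * ksw52 2 = 0 := by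
  simp only [ksw47, ksw52, Matrix.cons_val_zero, Matrix.cons_val_one, Matrix.head_cons, Matrix.cons_val_two, Matrix.tail_cons]
  linear_combination (-1 : ℝ) * ks_s2
private lemma kso_47_66 : ksw47 0 * ksw66 0 + ksw47 1 * ksw66 1 + ksw47 2 * ksw66 2 = 0 := by
  simp only [ksw47, ksw66, Matrix.cons_val_zero, Matrix.cons_val_one, Matrix.head_cons, Matrix.cons_val_two, Matrix.tail_cons]
  linear_combination (1 : ℝ) * ks_s2
private lemma kso_48_50 : ksw48 0 * ksw50 0 + ksw48 1 * ksw50 1 + ksw48 2 * ksw50 2 = 0 := by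
  simp only [ksw48, ksw50, Matrix.cons_val_zero, Matrix.cons_val_one, Matrix.head_cons, Matrix.cons_val_two, Matrix.tail_cons]
  linear_combination (-1 : ℝ) * ks_s2
private lemma kso_48_64 : ksw48 0 * ksw64 0 + ksw48 1 * ksw64 1 + ksw48 2 * ksw64 2 = 0 := by
  simp only [ksw48, ksw64, Matrix.cons_val_zero, Matrix.cons_val_one, Matrix.head_cons, Matrix.cons_val_two, Matrix.tail_cons]
  linear_combination (1 : ℝ) * ks_s2

/-- Kochen–Specker, rank-1 projection form in dimension 3: there is no `{0,1}`-valued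
function on projections of ℂ³ assigning the value `1` to exactly one member of each
orthogonal triple of rank-1 projections coming from an orthonormal basis. -/
theorem kochen_specker_coloring :
    ¬ ∃ v : Matrix (Fin 3) (Fin 3) ℂ → ℝ,
      (∀ P : Matrix (Fin 3) (Fin 3) ℂ, v P = 0 ∨ v P = 1) ∧
      (∀ e : Fin 3 → (Fin 3 → ℂ),
        (∀ i j, star (e i) ⬝ᵥ e j = if i = j then 1 else 0) →
        ∃! i : Fin 3, v (vecMulVec (e i) (star (e i))) = 1) := by
  rintro ⟨v, -, hb⟩
  have H0 := ks_count v (ksu ksw0 (1 : ℝ)) (ksu ksw3 (1 : ℝ)) (ksu ksw20 (1 : ℝ))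
    (hb ![(ksu ksw0 (1 : ℝ)), (ksu ksw3 (1 : ℝ)), (ksu ksw20 (1 : ℝ))] (ks_orth ksw0 ksw3 ksw20 (1 : ℝ) (1 : ℝ) (1 : ℝ) (by norm_num) (by norm_num) (by norm_num) ksd0 ksd3 ksd20 (by linear_combination kso_0_3) (by linear_combination kso_0_20) (by linear_combination kso_3_20)))
  have H1 := ks_count v (ksu ksw0 (1 : ℝ)) (ksu ksw10 (3 : ℝ)) (ksu ksw44 (3 : ℝ))
    (hb ![(ksu ksw0 (1 : ℝ)), (ksu ksw10 (3 : ℝ)), (ksu ksw44 (3 : ℝ))] (ks_orth ksw0 ksw10 ksw44 (1 : ℝ) (3 : ℝ) (3 : ℝ) (by norm_num) (by norm_num) (by norm_num) ksd0 ksd10 ksd44 (by linear_combination kso_0_10) (by linear_combination kso_0_44) (by linear_combination kso_10_44)))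
  have H2 := ks_count v (ksu ksw0 (1 : ℝ)) (ksu ksw15 (2 : ℝ)) (ksu ksw25 (2 : ℝ))
    (hb ![(ksu ksw0 (1 : ℝ)), (ksu ksw15 (2 : ℝ)), (ksu ksw25 (2 : ℝ))] (ks_orth ksw0 ksw15 ksw25 (1 : ℝ) (2 : ℝ) (2 : ℝ) (by norm_num) (by norm_num) (by norm_num) ksd0 ksd15 ksd25 (by linear_combination kso_0_15) (by linear_combination kso_0_25) (by linear_combination kso_15_25)))
  have H3 := ks_count v (ksu ksw0 (1 : ℝ)) (ksu ksw30 (3 : ℝ)) (ksu ksw37 (3 : ℝ))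
    (hb ![(ksu ksw0 (1 : ℝ)), (ksu ksw30 (3 : ℝ)), (ksu ksw37 (3 : ℝ))] (ks_orth ksw0 ksw30 ksw37 (1 : ℝ) (3 : ℝ) (3 : ℝ) (by norm_num) (by norm_num) (by norm_num) ksd0 ksd30 ksd37 (by linear_combination kso_0_30) (by linear_combination kso_0_37) (by linear_combination kso_30_37)))
  have H4 := ks_count v (ksu ksw1 (3 : ℝ)) (ksu ksw7 (3 : ℝ)) (ksu ksw20 (1 : ℝ))
    (hb ![(ksu ksw1 (3 : ℝ)), (ksu ksw7 (3 : ℝ)), (ksu ksw20 (1 : ℝ))] (ks_orth ksw1 ksw7 ksw20 (3 : ℝ) (3 : ℝ) (1 : ℝ) (by norm_num) (by norm_num) (by norm_num) ksd1 ksd7 ksd20 (by linear_combination kso_1_7) (by linear_combination kso_1_20) (by linear_combination kso_7_20)))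
  have H5 := ks_count v (ksu ksw2 (2 : ℝ)) (ksu ksw4 (2 : ℝ)) (ksu ksw20 (1 : ℝ))
    (hb ![(ksu ksw2 (2 : ℝ)), (ksu ksw4 (2 : ℝ)), (ksu ksw20 (1 : ℝ))] (ks_orth ksw2 ksw4 ksw20 (2 : ℝ) (2 : ℝ) (1 : ℝ) (by norm_num) (by norm_num) (by norm_num) ksd2 ksd4 ksd20 (by linear_combination kso_2_4) (by linear_combination kso_2_20) (by linear_combination kso_4_20)))
  have H6 := ks_count v (ksu ksw2 (2 : ℝ)) (ksu ksw8 (4 : ℝ)) (ksu ksw32 (4 : ℝ))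
    (hb ![(ksu ksw2 (2 : ℝ)), (ksu ksw8 (4 : ℝ)), (ksu ksw32 (4 : ℝ))] (ks_orth ksw2 ksw8 ksw32 (2 : ℝ) (4 : ℝ) (4 : ℝ) (by norm_num) (by norm_num) (by norm_num) ksd2 ksd8 ksd32 (by linear_combination kso_2_8) (by linear_combination kso_2_32) (by linear_combination kso_8_32)))
  have H7 := ks_count v (ksu ksw3 (1 : ℝ)) (ksu ksw18 (3 : ℝ)) (ksu ksw41 (3 : ℝ))
    (hb ![(ksu ksw3 (1 : ℝ)), (ksu ksw18 (3 : ℝ)), (ksu ksw41 (3 : ℝ))] (ks_orth ksw3 ksw18 ksw41 (1 : ℝ) (3 : ℝ) (3 : ℝ) (by norm_num) (by norm_num) (by norm_num) ksd3 ksd18 ksd41 (by linear_combination kso_3_18) (by linear_combination kso_3_41) (by linear_combination kso_18_41)))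
  have H8 := ks_count v (ksu ksw3 (1 : ℝ)) (ksu ksw19 (2 : ℝ)) (ksu ksw21 (2 : ℝ))
    (hb ![(ksu ksw3 (1 : ℝ)), (ksu ksw19 (2 : ℝ)), (ksu ksw21 (2 : ℝ))] (ks_orth ksw3 ksw19 ksw21 (1 : ℝ) (2 : ℝ) (2 : ℝ) (by norm_num) (by norm_num) (by norm_num) ksd3 ksd19 ksd21 (by linear_combination kso_3_19) (by linear_combination kso_3_21) (by linear_combination kso_19_21)))
  have H9 := ks_count v (ksu ksw3 (1 : ℝ)) (ksu ksw22 (3 : ℝ)) (ksu ksw40 (3 : ℝ))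
    (hb ![(ksu ksw3 (1 : ℝ)), (ksu ksw22 (3 : ℝ)), (ksu ksw40 (3 : ℝ))] (ks_orth ksw3 ksw22 ksw40 (1 : ℝ) (3 : ℝ) (3 : ℝ) (by norm_num) (by norm_num) (by norm_num) ksd3 ksd22 ksd40 (by linear_combination kso_3_22) (by linear_combination kso_3_40) (by linear_combination kso_22_40)))
  have H10 := ks_count v (ksu ksw4 (2 : ℝ)) (ksu ksw12 (4 : ℝ)) (ksu ksw28 (4 : ℝ))
    (hb ![(ksu ksw4 (2 : ℝ)), (ksu ksw12 (4 : ℝ)), (ksu ksw28 (4 : ℝ))] (ks_orth ksw4 ksw12 ksw28 (2 : ℝ) (4 : ℝ) (4 : ℝ) (by norm_num) (by norm_num) (by norm_num) ksd4 ksd12 ksd28 (by linear_combination kso_4_12) (by linear_combination kso_4_28) (by linear_combination kso_12_28)))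
  have H11 := ks_count v (ksu ksw5 (3 : ℝ)) (ksu ksw6 (3 : ℝ)) (ksu ksw20 (1 : ℝ))
    (hb ![(ksu ksw5 (3 : ℝ)), (ksu ksw6 (3 : ℝ)), (ksu ksw20 (1 : ℝ))] (ks_orth ksw5 ksw6 ksw20 (3 : ℝ) (3 : ℝ) (1 : ℝ) (by norm_num) (by norm_num) (by norm_num) ksd5 ksd6 ksd20 (by linear_combination kso_5_6) (by linear_combination kso_5_20) (by linear_combination kso_6_20)))
  have H12 := ks_count v (ksu ksw15 (2 : ℝ)) (ksu ksw47 (4 : ℝ)) (ksu ksw48 (4 : ℝ))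
    (hb ![(ksu ksw15 (2 : ℝ)), (ksu ksw47 (4 : ℝ)), (ksu ksw48 (4 : ℝ))] (ks_orth ksw15 ksw47 ksw48 (2 : ℝ) (4 : ℝ) (4 : ℝ) (by norm_num) (by norm_num) (by norm_num) ksd15 ksd47 ksd48 (by linear_combination kso_15_47) (by linear_combination kso_15_48) (by linear_combination kso_47_48)))
  have H13 := ks_count v (ksu ksw19 (2 : ℝ)) (ksu ksw39 (4 : ℝ)) (ksu ksw46 (4 : ℝ))
    (hb ![(ksu ksw19 (2 : ℝ)), (ksu ksw39 (4 : ℝ)), (ksu ksw46 (4 : ℝ))] (ks_orth ksw19 ksw39 ksw46 (2 : ℝ) (4 : ℝ) (4 : ℝ) (by norm_num) (by norm_num) (by norm_num) ksd19 ksd39 ksd46 (by linear_combination kso_19_39) (by linear_combination kso_19_46) (by linear_combination kso_39_46)))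
  have H14 := ks_count v (ksu ksw21 (2 : ℝ)) (ksu ksw35 (4 : ℝ)) (ksu ksw42 (4 : ℝ))
    (hb ![(ksu ksw21 (2 : ℝ)), (ksu ksw35 (4 : ℝ)), (ksu ksw42 (4 : ℝ))] (ks_orth ksw21 ksw35 ksw42 (2 : ℝ) (4 : ℝ) (4 : ℝ) (by norm_num) (by norm_num) (by norm_num) ksd21 ksd35 ksd42 (by linear_combination kso_21_35) (by linear_combination kso_21_42) (by linear_combination kso_35_42)))
  have H15 := ks_count v (ksu ksw25 (2 : ℝ)) (ksu ksw33 (4 : ℝ)) (ksu ksw34 (4 : ℝ))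
    (hb ![(ksu ksw25 (2 : ℝ)), (ksu ksw33 (4 : ℝ)), (ksu ksw34 (4 : ℝ))] (ks_orth ksw25 ksw33 ksw34 (2 : ℝ) (4 : ℝ) (4 : ℝ) (by norm_num) (by norm_num) (by norm_num) ksd25 ksd33 ksd34 (by linear_combination kso_25_33) (by linear_combination kso_25_34) (by linear_combination kso_33_34)))
  have H16 := ks_count v (ksu ksw1 (3 : ℝ)) (ksu ksw33 (4 : ℝ)) (ksu ksw49 (12 : ℝ))
    (hb ![(ksu ksw1 (3 : ℝ)), (ksu ksw33 (4 : ℝ)), (ksu ksw49 (12 : ℝ))] (ks_orth ksw1 ksw33 ksw49 (3 : ℝ) (4 : ℝ) (12 : ℝ) (by norm_num) (by norm_num) (by norm_num) ksd1 ksd33 ksd49 (by linear_combination kso_1_33) (by linear_combination kso_1_49) (by linear_combination kso_33_49)))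
  have H17 := ks_count v (ksu ksw1 (3 : ℝ)) (ksu ksw48 (4 : ℝ)) (ksu ksw50 (12 : ℝ))
    (hb ![(ksu ksw1 (3 : ℝ)), (ksu ksw48 (4 : ℝ)), (ksu ksw50 (12 : ℝ))] (ks_orth ksw1 ksw48 ksw50 (3 : ℝ) (4 : ℝ) (12 : ℝ) (by norm_num) (by norm_num) (by norm_num) ksd1 ksd48 ksd50 (by linear_combination kso_1_48) (by linear_combination kso_1_50) (by linear_combination kso_48_50)))
  have H18 := ks_count v (ksu ksw5 (3 : ℝ)) (ksu ksw34 (4 : ℝ)) (ksu ksw51 (12 : ℝ))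
    (hb ![(ksu ksw5 (3 : ℝ)), (ksu ksw34 (4 : ℝ)), (ksu ksw51 (12 : ℝ))] (ks_orth ksw5 ksw34 ksw51 (3 : ℝ) (4 : ℝ) (12 : ℝ) (by norm_num) (by norm_num) (by norm_num) ksd5 ksd34 ksd51 (by linear_combination kso_5_34) (by linear_combination kso_5_51) (by linear_combination kso_34_51)))
  have H19 := ks_count v (ksu ksw5 (3 : ℝ)) (ksu ksw47 (4 : ℝ)) (ksu ksw52 (12 : ℝ))
    (hb ![(ksu ksw5 (3 : ℝ)), (ksu ksw47 (4 : ℝ)), (ksu ksw52 (12 : ℝ))] (ks_orth ksw5 ksw47 ksw52 (3 : ℝ) (4 : ℝ) (12 : ℝ) (by norm_num) (by norm_num) (by norm_num) ksd5 ksd47 ksd52 (by linear_combination kso_5_47) (by linear_combination kso_5_52) (by linear_combination kso_47_52)))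
  have H20 := ks_count v (ksu ksw6 (3 : ℝ)) (ksu ksw35 (4 : ℝ)) (ksu ksw53 (12 : ℝ))
    (hb ![(ksu ksw6 (3 : ℝ)), (ksu ksw35 (4 : ℝ)), (ksu ksw53 (12 : ℝ))] (ks_orth ksw6 ksw35 ksw53 (3 : ℝ) (4 : ℝ) (12 : ℝ) (by norm_num) (by norm_num) (by norm_num) ksd6 ksd35 ksd53 (by linear_combination kso_6_35) (by linear_combination kso_6_53) (by linear_combination kso_35_53)))
  have H21 := ks_count v (ksu ksw6 (3 : ℝ)) (ksu ksw46 (4 : ℝ)) (ksu ksw54 (12 : ℝ))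
    (hb ![(ksu ksw6 (3 : ℝ)), (ksu ksw46 (4 : ℝ)), (ksu ksw54 (12 : ℝ))] (ks_orth ksw6 ksw46 ksw54 (3 : ℝ) (4 : ℝ) (12 : ℝ) (by norm_num) (by norm_num) (by norm_num) ksd6 ksd46 ksd54 (by linear_combination kso_6_46) (by linear_combination kso_6_54) (by linear_combination kso_46_54)))
  have H22 := ks_count v (ksu ksw7 (3 : ℝ)) (ksu ksw39 (4 : ℝ)) (ksu ksw55 (12 : ℝ))
    (hb ![(ksu ksw7 (3 : ℝ)), (ksu ksw39 (4 : ℝ)), (ksu ksw55 (12 : ℝ))] (ks_orth ksw7 ksw39 ksw55 (3 : ℝ) (4 : ℝ) (12 : ℝ) (by norm_num) (by norm_num) (by norm_num) ksd7 ksd39 ksd55 (by linear_combination kso_7_39) (by linear_combination kso_7_55) (by linear_combination kso_39_55)))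
  have H23 := ks_count v (ksu ksw7 (3 : ℝ)) (ksu ksw42 (4 : ℝ)) (ksu ksw56 (12 : ℝ))
    (hb ![(ksu ksw7 (3 : ℝ)), (ksu ksw42 (4 : ℝ)), (ksu ksw56 (12 : ℝ))] (ks_orth ksw7 ksw42 ksw56 (3 : ℝ) (4 : ℝ) (12 : ℝ) (by norm_num) (by norm_num) (by norm_num) ksd7 ksd42 ksd56 (by linear_combination kso_7_42) (by linear_combination kso_7_56) (by linear_combination kso_42_56)))
  have H24 := ks_count v (ksu ksw8 (4 : ℝ)) (ksu ksw41 (3 : ℝ)) (ksu ksw57 (12 : ℝ))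
    (hb ![(ksu ksw8 (4 : ℝ)), (ksu ksw41 (3 : ℝ)), (ksu ksw57 (12 : ℝ))] (ks_orth ksw8 ksw41 ksw57 (4 : ℝ) (3 : ℝ) (12 : ℝ) (by norm_num) (by norm_num) (by norm_num) ksd8 ksd41 ksd57 (by linear_combination kso_8_41) (by linear_combination kso_8_57) (by linear_combination kso_41_57)))
  have H25 := ks_count v (ksu ksw8 (4 : ℝ)) (ksu ksw44 (3 : ℝ)) (ksu ksw58 (12 : ℝ))
    (hb ![(ksu ksw8 (4 : ℝ)), (ksu ksw44 (3 : ℝ)), (ksu ksw58 (12 : ℝ))] (ks_orth ksw8 ksw44 ksw58 (4 : ℝ) (3 : ℝ) (12 : ℝ) (by norm_num) (by norm_num) (by norm_num) ksd8 ksd44 ksd58 (by linear_combination kso_8_44) (by linear_combination kso_8_58) (by linear_combination kso_44_58)))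
  have H26 := ks_count v (ksu ksw10 (3 : ℝ)) (ksu ksw42 (4 : ℝ)) (ksu ksw59 (12 : ℝ))
    (hb ![(ksu ksw10 (3 : ℝ)), (ksu ksw42 (4 : ℝ)), (ksu ksw59 (12 : ℝ))] (ks_orth ksw10 ksw42 ksw59 (3 : ℝ) (4 : ℝ) (12 : ℝ) (by norm_num) (by norm_num) (by norm_num) ksd10 ksd42 ksd59 (by linear_combination kso_10_42) (by linear_combination kso_10_59) (by linear_combination kso_42_59)))
  have H27 := ks_count v (ksu ksw10 (3 : ℝ)) (ksu ksw46 (4 : ℝ)) (ksu ksw60 (12 : ℝ))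
    (hb ![(ksu ksw10 (3 : ℝ)), (ksu ksw46 (4 : ℝ)), (ksu ksw60 (12 : ℝ))] (ks_orth ksw10 ksw46 ksw60 (3 : ℝ) (4 : ℝ) (12 : ℝ) (by norm_num) (by norm_num) (by norm_num) ksd10 ksd46 ksd60 (by linear_combination kso_10_46) (by linear_combination kso_10_60) (by linear_combination kso_46_60)))
  have H28 := ks_count v (ksu ksw12 (4 : ℝ)) (ksu ksw40 (3 : ℝ)) (ksu ksw61 (12 : ℝ))
    (hb ![(ksu ksw12 (4 : ℝ)), (ksu ksw40 (3 : ℝ)), (ksu ksw61 (12 : ℝ))] (ks_orth ksw12 ksw40 ksw61 (4 : ℝ) (3 : ℝ) (12 : ℝ) (by norm_num) (by norm_num) (by norm_num) ksd12 ksd40 ksd61 (by linear_combination kso_12_40) (by linear_combination kso_12_61) (by linear_combination kso_40_61)))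
  have H29 := ks_count v (ksu ksw12 (4 : ℝ)) (ksu ksw44 (3 : ℝ)) (ksu ksw62 (12 : ℝ))
    (hb ![(ksu ksw12 (4 : ℝ)), (ksu ksw44 (3 : ℝ)), (ksu ksw62 (12 : ℝ))] (ks_orth ksw12 ksw44 ksw62 (4 : ℝ) (3 : ℝ) (12 : ℝ) (by norm_num) (by norm_num) (by norm_num) ksd12 ksd44 ksd62 (by linear_combination kso_12_44) (by linear_combination kso_12_62) (by linear_combination kso_44_62)))
  have H30 := ks_count v (ksu ksw18 (3 : ℝ)) (ksu ksw34 (4 : ℝ)) (ksu ksw63 (12 : ℝ))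
    (hb ![(ksu ksw18 (3 : ℝ)), (ksu ksw34 (4 : ℝ)), (ksu ksw63 (12 : ℝ))] (ks_orth ksw18 ksw34 ksw63 (3 : ℝ) (4 : ℝ) (12 : ℝ) (by norm_num) (by norm_num) (by norm_num) ksd18 ksd34 ksd63 (by linear_combination kso_18_34) (by linear_combination kso_18_63) (by linear_combination kso_34_63)))
  have H31 := ks_count v (ksu ksw18 (3 : ℝ)) (ksu ksw48 (4 : ℝ)) (ksu ksw64 (12 : ℝ))
    (hb ![(ksu ksw18 (3 : ℝ)), (ksu ksw48 (4 : ℝ)), (ksu ksw64 (12 : ℝ))] (ks_orth ksw18 ksw48 ksw64 (3 : ℝ) (4 : ℝ) (12 : ℝ) (by norm_num) (by norm_num) (by norm_num) ksd18 ksd48 ksd64 (by linear_combination kso_18_48) (by linear_combination kso_18_64) (by linear_combination kso_48_64)))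
  have H32 := ks_count v (ksu ksw22 (3 : ℝ)) (ksu ksw33 (4 : ℝ)) (ksu ksw65 (12 : ℝ))
    (hb ![(ksu ksw22 (3 : ℝ)), (ksu ksw33 (4 : ℝ)), (ksu ksw65 (12 : ℝ))] (ks_orth ksw22 ksw33 ksw65 (3 : ℝ) (4 : ℝ) (12 : ℝ) (by norm_num) (by norm_num) (by norm_num) ksd22 ksd33 ksd65 (by linear_combination kso_22_33) (by linear_combination kso_22_65) (by linear_combination kso_33_65)))
  have H33 := ks_count v (ksu ksw22 (3 : ℝ)) (ksu ksw47 (4 : ℝ)) (ksu ksw66 (12 : ℝ))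
    (hb ![(ksu ksw22 (3 : ℝ)), (ksu ksw47 (4 : ℝ)), (ksu ksw66 (12 : ℝ))] (ks_orth ksw22 ksw47 ksw66 (3 : ℝ) (4 : ℝ) (12 : ℝ) (by norm_num) (by norm_num) (by norm_num) ksd22 ksd47 ksd66 (by linear_combination kso_22_47) (by linear_combination kso_22_66) (by linear_combination kso_47_66)))
  have H34 := ks_count v (ksu ksw28 (4 : ℝ)) (ksu ksw37 (3 : ℝ)) (ksu ksw67 (12 : ℝ))
    (hb ![(ksu ksw28 (4 : ℝ)), (ksu ksw37 (3 : ℝ)), (ksu ksw67 (12 : ℝ))] (ks_orth ksw28 ksw37 ksw67 (4 : ℝ) (3 : ℝ) (12 : ℝ) (by norm_num) (by norm_num) (by norm_num) ksd28 ksd37 ksd67 (by linear_combination kso_28_37) (by linear_combination kso_28_67) (by linear_combination kso_37_67)))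
  have H35 := ks_count v (ksu ksw28 (4 : ℝ)) (ksu ksw41 (3 : ℝ)) (ksu ksw68 (12 : ℝ))
    (hb ![(ksu ksw28 (4 : ℝ)), (ksu ksw41 (3 : ℝ)), (ksu ksw68 (12 : ℝ))] (ks_orth ksw28 ksw41 ksw68 (4 : ℝ) (3 : ℝ) (12 : ℝ) (by norm_num) (by norm_num) (by norm_num) ksd28 ksd41 ksd68 (by linear_combination kso_28_41) (by linear_combination kso_28_68) (by linear_combination kso_41_68)))
  have H36 := ks_count v (ksu ksw30 (3 : ℝ)) (ksu ksw35 (4 : ℝ)) (ksu ksw69 (12 : ℝ))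
    (hb ![(ksu ksw30 (3 : ℝ)), (ksu ksw35 (4 : ℝ)), (ksu ksw69 (12 : ℝ))] (ks_orth ksw30 ksw35 ksw69 (3 : ℝ) (4 : ℝ) (12 : ℝ) (by norm_num) (by norm_num) (by norm_num) ksd30 ksd35 ksd69 (by linear_combination kso_30_35) (by linear_combination kso_30_69) (by linear_combination kso_35_69)))
  have H37 := ks_count v (ksu ksw30 (3 : ℝ)) (ksu ksw39 (4 : ℝ)) (ksu ksw70 (12 : ℝ))
    (hb ![(ksu ksw30 (3 : ℝ)), (ksu ksw39 (4 : ℝ)), (ksu ksw70 (12 : ℝ))] (ks_orth ksw30 ksw39 ksw70 (3 : ℝ) (4 : ℝ) (12 : ℝ) (by norm_num) (by norm_num) (by norm_num) ksd30 ksd39 ksd70 (by linear_combination kso_30_39) (by linear_combination kso_30_70) (by linear_combination kso_39_70)))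
  have H38 := ks_count v (ksu ksw32 (4 : ℝ)) (ksu ksw37 (3 : ℝ)) (ksu ksw71 (12 : ℝ))
    (hb ![(ksu ksw32 (4 : ℝ)), (ksu ksw37 (3 : ℝ)), (ksu ksw71 (12 : ℝ))] (ks_orth ksw32 ksw37 ksw71 (4 : ℝ) (3 : ℝ) (12 : ℝ) (by norm_num) (by norm_num) (by norm_num) ksd32 ksd37 ksd71 (by linear_combination kso_32_37) (by linear_combination kso_32_71) (by linear_combination kso_37_71)))
  have H39 := ks_count v (ksu ksw32 (4 : ℝ)) (ksu ksw40 (3 : ℝ)) (ksu ksw72 (12 : ℝ))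
    (hb ![(ksu ksw32 (4 : ℝ)), (ksu ksw40 (3 : ℝ)), (ksu ksw72 (12 : ℝ))] (ks_orth ksw32 ksw40 ksw72 (4 : ℝ) (3 : ℝ) (12 : ℝ) (by norm_num) (by norm_num) (by norm_num) ksd32 ksd40 ksd72 (by linear_combination kso_32_40) (by linear_combination kso_32_72) (by linear_combination kso_40_72)))
  exact peres_core _ _ _ _ _ _ _ _ _ _ _ _ _ _ _ _ _ _ _ _ _ _ _ _ _ _ _ _ _ _ _ _ _ _ _ _ _ _ _ _ _ _ _ _ _ _ _ _ _ _ _ _ _ _ _ _ _ H0 H1 H2 H3 H4 H5 H6 H7 H8 H9 H10 H11 H12 H13 H14 H15 H16 H17 H18 H19 H20 H21 H22 H23 H24 H25 H26 H27 H28 H29 H30 H31 H32 H33 H34 H35 H36 H37 H38 H39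
end
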